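/- arXiv:2106.07265 — 9 statements merged into one kernel-verified Lean document; each statement's English description precedes it below -/
import Mathlib

section
/- Let k be a non-negative, locally integrable, measurable function on (0,∞) and let ρ be a sigma-finite Borel measure on [0,∞) such that (k, ρ) forms a generalized Sonine pair, i.e. ∫_{[0,t]} k(t − s) dρ(s) = 1 for all t > 0. Define the semi-fractional integral I_{(k)} f(x) = ∫_{[0,x]} f(x − y) dρ(y) and the Riemann–Liouville type derivative D_{(k)} g(x) = (d/dx) ∫₀^x g(x − y) k(y) dy. Then for every continuous, locally bounded function f on [0,∞) and every x > 0, D_{(k)}(I_{(k)} f)(x) = f(x); that is, I_{(k)} is a right inverse of D_{(k)}. -/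
open MeasureTheory Set Filter Real

noncomputable section

/-- `ψ` is a Bernstein function: `C^∞` on `(0,∞)`, nonnegative on `(0,∞)`,
and `(−1)^(n−1) ψ^(n)(x) ≥ 0` for all `n ≥ 1` and `x > 0`. -/
def IsBernstein (ψ : ℝ → ℝ) : Prop :=
  ContDiffOn ℝ (⊤ : ℕ∞) ψ (Set.Ioi 0) ∧
  (∀ x > (0:ℝ), 0 ≤ ψ x) ∧
  ∀ n : ℕ, 0 < n → ∀ x > (0:ℝ), 0 ≤ (-1 : ℝ) ^ (n - 1) * iteratedDeriv n ψ x

/-- `ψ` is a self-similar Bernstein function w.r.t. `α` and `c`: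
it is Bernstein and `ψ(c^(1/α) x) = c·ψ(x)` for all `x > 0`. -/
def IsSelfSimilarBernstein (ψ : ℝ → ℝ) (α c : ℝ) : Prop :=
  IsBernstein ψ ∧ ∀ x > (0:ℝ), ψ (c ^ (1/α) * x) = c * ψ x

/-- `θ` is admissable w.r.t. `α` and `c`: positive, `t ↦ t^(−α) θ(log t)` non-increasing
on `(0,∞)`, and `log (c^(1/α))`-periodic. -/
def IsAdmissable (θ : ℝ → ℝ) (α c : ℝ) : Prop :=
  (∀ x : ℝ, 0 < θ x) ∧
  AntitoneOn (fun t : ℝ => t ^ (-α) * θ (Real.log t)) (Set.Ioi 0) ∧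
  Function.Periodic θ (Real.log (c ^ (1/α)))

/-- `φ` is the Borel measure concentrated on `(0,∞)` with tail
`φ((t,∞)) = t^(−α) θ(log t)` for `t > 0`. -/
def IsTailMeasure (φ : MeasureTheory.Measure ℝ) (α : ℝ) (θ : ℝ → ℝ) : Prop :=
  φ (Set.Iic 0) = 0 ∧
  ∀ t > (0:ℝ), φ (Set.Ioi t) = ENNReal.ofReal (t ^ (-α) * θ (Real.log t))

/-- `θ` is "smooth" in the sense of the paper: continuous and piecewise continuously
differentiable (here: `C¹` off a closed countable set). -/
def IsPiecewiseC1 (θ : ℝ → ℝ) : Prop :=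
  Continuous θ ∧ ∃ S : Set ℝ, S.Countable ∧ IsClosed S ∧ ContDiffOn ℝ 1 θ Sᶜ

open scoped ENNReal Topology

/-!
Extend `f` by zero outside `[0, u]` to `F` and `k` by zero to `(-∞, 0]`. The double integral
`∫₀ᵘ (∫_{[0,u-y]} f(u-y-z) dρ(z)) k(y) dy` is then the integral of `F(u-y-z) k(y)` over `ρ ⊗ λ`, and
the shear `(z, y) ↦ (z, u-y-z)`, which preserves `ρ ⊗ λ`, turns it into `∫ F(w) (k ∗ ρ)(u-w) dw`.
The Sonine identity gives `(k ∗ ρ)(t) = 1` for every `t > 0` that is not an atom of `ρ` (at an atom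
the value `k 0` enters), hence for almost every `t`, so the double integral is `∫₀ᵘ f` and its
derivative is `f`. The same computation with absolute values, where `∫ |k(t-z)| dρ(z) ≤ 1`,
justifies Fubini.
-/

namespace SoninePair

lemma ae_measure_singleton_eq_zero {α : Type*} [MeasurableSpace α] [MeasurableSingletonClass α]
    (μ ρ : Measure α) [NullSingletonClass μ] [SFinite ρ] : ∀ᵐ t ∂μ, ρ {t} = 0 := by
  refine measure_eq_zero_iff_ae_notMem.1
    ((Measure.countable_meas_level_set_pos (μ := ρ) measurable_id).measure_zero μ) |>.mono ?_
  intro t ht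
  simpa [pos_iff_ne_zero] using ht

section Convolution

variable (ρ : Measure ℝ) [SFinite ρ]

lemma involutive_sub_sub (u : ℝ) :
    Function.Involutive (fun p : ℝ × ℝ => (p.1, u - p.2 - p.1)) := by
  intro p
  exact Prod.ext rfl (by simp only; ring)

lemma measurableEmbedding_sub_sub (u : ℝ) :
    MeasurableEmbedding (fun p : ℝ × ℝ => (p.1, u - p.2 - p.1)) :=
  (MeasurableEquiv.ofInvolutive _ (involutive_sub_sub u) (by fun_prop)).measurableEmbedding

lemma measurePreserving_sub_sub (u : ℝ) :
    MeasurePreserving (fun p : ℝ × ℝ => (p.1, u - p.2 - p.1)) (ρ.prod volume) (ρ.prod volume) := by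
  refine (MeasurePreserving.id ρ).skew_product (g := fun z y => u - y - z) (by fun_prop)
    (Eventually.of_forall fun z => ?_)
  simp_rw [sub_right_comm u]
  exact (volume.measurePreserving_sub_left (u - z)).map_eq

lemma lintegral_prod_comp_sub_sub_mul {h K : ℝ → ℝ≥0∞} (hh : Measurable h) (hK : Measurable K)
    (u : ℝ) :
    ∫⁻ p, h (u - p.2 - p.1) * K p.2 ∂(ρ.prod volume) = ∫⁻ w, h w * ∫⁻ z, K (u - w - z) ∂ρ := by
  rw [← (measurePreserving_sub_sub ρ u).lintegral_comp (by fun_prop),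
    lintegral_prod_symm _ (by fun_prop)]
  refine lintegral_congr fun w => ?_
  rw [← lintegral_const_mul _ (by fun_prop)]
  congr with z
  simp only [show u - (u - w - z) - z = w by ring]

lemma integral_comp_sub_sub_mul {h k : ℝ → ℝ} {u : ℝ}
    (hint : Integrable (fun p : ℝ × ℝ => h (u - p.2 - p.1) * k p.2) (ρ.prod volume)) :
    ∫ y, (∫ z, h (u - y - z) ∂ρ) * k y = ∫ w, h w * ∫ z, k (u - w - z) ∂ρ := by
  have hint' : Integrable (fun p : ℝ × ℝ => h p.2 * k (u - p.2 - p.1)) (ρ.prod volume) := by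
    have := ((measurePreserving_sub_sub ρ u).integrable_comp_emb
      (measurableEmbedding_sub_sub u)).2 hint
    convert this using 2 with p
    simp only [Function.comp, show u - (u - p.2 - p.1) - p.1 = p.2 by ring]
  calc ∫ y, (∫ z, h (u - y - z) ∂ρ) * k y
      = ∫ p, h (u - p.2 - p.1) * k p.2 ∂(ρ.prod volume) := by
        rw [integral_prod_symm _ hint]
        simp_rw [integral_mul_const]
    _ = ∫ p, h p.2 * k (u - p.2 - p.1) ∂(ρ.prod volume) := by
        rw [← (measurePreserving_sub_sub ρ u).integral_comp (measurableEmbedding_sub_sub u)]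
        simp only [show ∀ p : ℝ × ℝ, u - (u - p.2 - p.1) - p.1 = p.2 from fun p => by ring]
    _ = ∫ w, h w * ∫ z, k (u - w - z) ∂ρ := by
        rw [integral_prod_symm _ hint']
        simp_rw [integral_const_mul]

lemma integrable_comp_sub_sub_mul {h k : ℝ → ℝ} (hh : Integrable h) (hhm : Measurable h)
    (hk : Measurable k) {C : ℝ≥0∞} (hC : C ≠ ∞)
    (hbound : ∀ᵐ t, ∫⁻ z, ‖k (t - z)‖ₑ ∂ρ ≤ C) (u : ℝ) :
    Integrable (fun p : ℝ × ℝ => h (u - p.2 - p.1) * k p.2) (ρ.prod volume) := by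
  refine ⟨by fun_prop, ?_⟩
  have hbound' : ∀ᵐ w, ∫⁻ z, ‖k (u - w - z)‖ₑ ∂ρ ≤ C :=
    (volume.measurePreserving_sub_left u).quasiMeasurePreserving.ae hbound
  calc ∫⁻ p, ‖h (u - p.2 - p.1) * k p.2‖ₑ ∂(ρ.prod volume)
      = ∫⁻ w, ‖h w‖ₑ * ∫⁻ z, ‖k (u - w - z)‖ₑ ∂ρ := by
        simp_rw [enorm_mul]
        exact lintegral_prod_comp_sub_sub_mul ρ hhm.enorm hk.enorm u
    _ ≤ ∫⁻ w, ‖h w‖ₑ * C := lintegral_mono_ae (hbound'.mono fun w hw => by gcongr)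
    _ < ∞ := by
        rw [lintegral_mul_const' _ _ hC]
        exact ENNReal.mul_lt_top hh.2 hC.lt_top

end Convolution

section Sonine

variable {ρ : Measure ℝ} (hρ : ρ (Iio 0) = 0)
include hρ

lemma ae_nonneg_of_measure_Iio_eq_zero : ∀ᵐ z ∂ρ, 0 ≤ z :=
  (measure_eq_zero_iff_ae_notMem.1 hρ).mono fun _ hz => not_lt.1 hz

lemma integral_indicator_Ioi_comp_sub (k : ℝ → ℝ) {t : ℝ} (ht : ρ {t} = 0) :
    ∫ z, (Ioi 0).indicator k (t - z) ∂ρ = ∫ z in Icc 0 t, k (t - z) ∂ρ := by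
  rw [← integral_indicator measurableSet_Icc]
  refine integral_congr_ae ?_
  filter_upwards [ae_nonneg_of_measure_Iio_eq_zero hρ, measure_eq_zero_iff_ae_notMem.1 ht]
    with z hz hzt
  have hmem : t - z ∈ Ioi 0 ↔ z ∈ Icc 0 t := by
    simp only [mem_Ioi, mem_Icc, sub_pos, hz, true_and]
    exact ⟨le_of_lt, fun h => lt_of_le_of_ne h hzt⟩
  simp only [indicator, hmem]

lemma integral_indicator_Icc_comp_sub_sub (f : ℝ → ℝ) {u y : ℝ} (hy : 0 < y) :
    ∫ z, (Icc 0 u).indicator f (u - y - z) ∂ρ = ∫ z in Icc 0 (u - y), f (u - y - z) ∂ρ := by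
  rw [← integral_indicator measurableSet_Icc]
  refine integral_congr_ae ?_
  filter_upwards [ae_nonneg_of_measure_Iio_eq_zero hρ] with z hz
  have hmem : u - y - z ∈ Icc 0 u ↔ z ∈ Icc 0 (u - y) := by
    simp only [mem_Icc]
    constructor <;> intro h <;> constructor <;> linarith [h.1, h.2]
  simp only [indicator, hmem]

variable {k : ℝ → ℝ} (hk : ∀ y > 0, 0 ≤ k y)
  (hSonine : ∀ t > 0, ∫ s in Icc 0 t, k (t - s) ∂ρ = 1)
include hk hSonine

lemma lintegral_enorm_indicator_comp_sub_le_one {t : ℝ} (ht : ρ {t} = 0) :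
    ∫⁻ z, ‖(Ioi 0).indicator k (t - z)‖ₑ ∂ρ ≤ 1 := by
  rcases le_or_gt t 0 with ht0 | ht0
  · have hzero : (fun z => ‖(Ioi 0).indicator k (t - z)‖ₑ) =ᵐ[ρ] 0 := by
      filter_upwards [ae_nonneg_of_measure_Iio_eq_zero hρ] with z hz
      simp [indicator_of_notMem (show t - z ∉ Ioi 0 by simp only [mem_Ioi]; linarith)]
    simp [lintegral_congr_ae hzero]
  · have hone : ∫ z, (Ioi 0).indicator k (t - z) ∂ρ = 1 := by
      rw [integral_indicator_Ioi_comp_sub hρ k ht, hSonine t ht0]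
    have hnn : 0 ≤ fun z => (Ioi 0).indicator k (t - z) :=
      fun z => indicator_nonneg (fun y hy => hk y hy) _
    rw [lintegral_enorm_of_nonneg hnn, ← ofReal_integral_eq_lintegral_ofReal
      (Integrable.of_integral_ne_zero (by rw [hone]; exact one_ne_zero))
      (Eventually.of_forall hnn), hone, ENNReal.ofReal_one]

lemma intervalIntegral_conv_eq_intervalIntegral [SFinite ρ] (hkm : Measurable k) {f : ℝ → ℝ}
    {u : ℝ} (hu : 0 ≤ u) (hf : ContinuousOn f (Icc 0 u)) :
    ∫ y in 0..u, (∫ z in Icc 0 (u - y), f (u - y - z) ∂ρ) * k y = ∫ w in 0..u, f w := by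
  set F := (Icc 0 u).indicator f
  set k' := (Ioi 0).indicator k
  have hFm : Measurable F := by
    rw [show F = (Icc 0 u).piecewise f 0 from (piecewise_eq_indicator).symm]
    exact hf.measurable_piecewise continuousOn_const measurableSet_Icc
  have hF : Integrable F := (integrable_indicator_iff measurableSet_Icc).2 hf.integrableOn_Icc
  have hk'm : Measurable k' := hkm.indicator measurableSet_Ioi
  have hbound : ∀ᵐ t, ∫⁻ z, ‖k' (t - z)‖ₑ ∂ρ ≤ 1 :=
    (ae_measure_singleton_eq_zero volume ρ).mono fun t ht =>
      lintegral_enorm_indicator_comp_sub_le_one hρ hk hSonine ht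
  have hlhs : ∀ y, (Ioc 0 u).indicator (fun y => (∫ z in Icc 0 (u - y), f (u - y - z) ∂ρ) * k y) y
      = (∫ z, F (u - y - z) ∂ρ) * k' y := by
    intro y
    rcases le_or_gt y 0 with hy | hy
    · simp [k', indicator_of_notMem (show y ∉ Ioc 0 u from fun h => hy.not_gt h.1),
        indicator_of_notMem (show y ∉ Ioi 0 from hy.not_gt)]
    rw [integral_indicator_Icc_comp_sub_sub hρ f hy, show k' y = k y from indicator_of_mem hy k]
    rcases le_or_gt y u with hyu | hyu
    · exact indicator_of_mem (show y ∈ Ioc 0 u from ⟨hy, hyu⟩) _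
    · simp [indicator_of_notMem (show y ∉ Ioc 0 u from fun h => hyu.not_ge h.2),
        Icc_eq_empty_of_lt (show u - y < 0 by linarith)]
  have hconv_one : ∀ᵐ w, F w * ∫ z, k' (u - w - z) ∂ρ = F w := by
    filter_upwards [(volume.measurePreserving_sub_left u).quasiMeasurePreserving.ae
      (ae_measure_singleton_eq_zero volume ρ), measure_eq_zero_iff_ae_notMem.1
      (measure_singleton (μ := volume) u)] with w hw hwu
    by_cases hwF : w ∈ Icc 0 u
    · have hpos : 0 < u - w := sub_pos.2 (lt_of_le_of_ne hwF.2 hwu)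
      rw [integral_indicator_Ioi_comp_sub hρ k hw, hSonine _ hpos, mul_one]
    · simp [F, indicator_of_notMem hwF]
  calc ∫ y in 0..u, (∫ z in Icc 0 (u - y), f (u - y - z) ∂ρ) * k y
      = ∫ y, (∫ z, F (u - y - z) ∂ρ) * k' y := by
        rw [intervalIntegral.integral_of_le hu, ← integral_indicator measurableSet_Ioc]
        simp_rw [hlhs]
    _ = ∫ w, F w * ∫ z, k' (u - w - z) ∂ρ := integral_comp_sub_sub_mul ρ
        (integrable_comp_sub_sub_mul ρ hF hFm hk'm ENNReal.one_ne_top hbound u)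
    _ = ∫ w in 0..u, f w := by
        rw [integral_congr_ae hconv_one, integral_indicator measurableSet_Icc,
          intervalIntegral.integral_of_le hu, integral_Icc_eq_integral_Ioc]

end Sonine

end SoninePair

theorem stmt5_general (k : ℝ → ℝ) (hk_nonneg : ∀ y > (0:ℝ), 0 ≤ k y) (hk_meas : Measurable k)
    (ρ : MeasureTheory.Measure ℝ) [SigmaFinite ρ] (hρ0 : ρ (Set.Iio 0) = 0)
    (hSonine : ∀ t > (0:ℝ), ∫ s in Set.Icc (0:ℝ) t, k (t - s) ∂ρ = 1)
    (f : ℝ → ℝ) (hf : ContinuousOn f (Set.Ici 0)) :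
    ∀ x > (0:ℝ),
      deriv (fun u : ℝ => ∫ y in (0:ℝ)..u,
        (∫ z in Set.Icc (0:ℝ) (u - y), f (u - y - z) ∂ρ) * k y) x = f x := by
  intro x hx
  have hprimitive : (fun u : ℝ => ∫ y in (0:ℝ)..u,
      (∫ z in Set.Icc (0:ℝ) (u - y), f (u - y - z) ∂ρ) * k y) =ᶠ[𝓝 x]
        fun u => ∫ w in (0:ℝ)..u, f w := by
    filter_upwards [Ioi_mem_nhds hx] with u hu
    exact SoninePair.intervalIntegral_conv_eq_intervalIntegral hρ0 hk_nonneg hSonine hk_meas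
      hu.le (hf.mono Icc_subset_Ici_self)
  rw [hprimitive.deriv_eq]
  refine (intervalIntegral.integral_hasDerivAt_right ?_ ?_
    (hf.continuousAt (Ici_mem_nhds hx))).deriv
  · exact (hf.mono (uIcc_of_le hx.le ▸ Icc_subset_Ici_self)).intervalIntegrable
  · exact ⟨Ici 0, Ici_mem_nhds hx, hf.aestronglyMeasurable measurableSet_Ici⟩

/-- for a generalized Sonine pair `(k, ρ)`, the Riemann–Liouville type
derivative `D_(k)` is a left inverse of the semi-fractional integral `I_(k)`:
`D_(k)(I_(k) f) = f`. -/
theorem stmt5 (k : ℝ → ℝ) (hk_nonneg : ∀ y > (0:ℝ), 0 ≤ k y) (hk_meas : Measurable k)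
    (hk_int : MeasureTheory.LocallyIntegrableOn k (Set.Ioi 0))
    (ρ : MeasureTheory.Measure ℝ) [SigmaFinite ρ] (hρ0 : ρ (Set.Iio 0) = 0)
    (hSonine : ∀ t > (0:ℝ), ∫ s in Set.Icc (0:ℝ) t, k (t - s) ∂ρ = 1)
    (f : ℝ → ℝ) (hf : ContinuousOn f (Set.Ici 0)) :
    ∀ x > (0:ℝ),
      deriv (fun u : ℝ => ∫ y in (0:ℝ)..u,
        (∫ z in Set.Icc (0:ℝ) (u - y), f (u - y - z) ∂ρ) * k y) x = f x :=
  stmt5_general k hk_nonneg hk_meas ρ hρ0 hSonine f hf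
end
end

section
/- Let k be a non-negative, locally integrable, measurable function on (0,∞) and let ρ be a sigma-finite Borel measure on [0,∞) such that (k, ρ) forms a generalized Sonine pair, i.e. ∫_{[0,t]} k(t − s) dρ(s) = 1 for all t > 0. Define the semi-fractional integral I_{(k)} f(x) = ∫_{[0,x]} f(x − y) dρ(y) and, for an absolutely continuous function f on [0,∞) with almost-everywhere derivative f′, the Caputo type derivative D_{(k)} f(x) = ∫₀^x f′(x − y) k(y) dy. Then for every absolutely continuous function f on [0,∞) and every x > 0, I_{(k)}(D_{(k)} f)(x) = f(x) − f(0). -/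
/-! Substituting `u = x - y - s` turns the inner integral into the convolution of `f'` with `k`
at `x - y`. By Fubini the `ρ`-integral can be taken first; for fixed `u ∈ (0, x)` it is the
Sonine integral at `t = x - u`, up to the point `s = t` where `k` is evaluated at `0`. That point
matters only when `t` is an atom of `ρ`, which happens for countably many `u`, so the double
integral collapses to `∫₀ˣ f' = f x - f 0`. -/

open MeasureTheory Set Filter Real

noncomputable section

theorem ae_measure_singleton_sub_eq_zero (ρ : Measure ℝ) [SFinite ρ] (x : ℝ) :
    ∀ᵐ u, ρ {x - u} = 0 := by
  have hatoms : {t : ℝ | 0 < ρ {t}}.Countable :=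
    Measure.countable_meas_pos_of_disjoint_iUnion (fun _ => measurableSet_singleton _)
      (fun _ _ h => disjoint_singleton.mpr h)
  refine measure_mono_null (fun u hu => ?_) ((hatoms.image (x - ·)).measure_zero volume)
  exact ⟨x - u, pos_iff_ne_zero.mpr hu, sub_sub_cancel x u⟩

theorem integral_integral_mul_sub_eq_integral {μ : Measure ℝ} [SFinite μ] {G K : ℝ → ℝ}
    {x : ℝ} (hG : Integrable G) (hK : Measurable K) (hK0 : ∀ z, 0 ≤ K z)
    (hGK : ∀ᵐ u, G u ≠ 0 → ∫ y, K (x - u - y) ∂μ = 1) :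
    ∫ y, (∫ u, G u * K (x - y - u)) ∂μ = ∫ u, G u := by
  set F : ℝ × ℝ → ℝ := fun p => G p.2 * K (x - p.1 - p.2)
  have hsection : ∀ᵐ u, Integrable (fun y => F (y, u)) μ ∧
      ∫ y, ‖F (y, u)‖ ∂μ = ‖G u‖ ∧ ∫ y, F (y, u) ∂μ = G u := by
    filter_upwards [hGK] with u hu
    rcases eq_or_ne (G u) 0 with h0 | h0
    · simp [F, h0]
    have hK1 : ∫ y, K (x - y - u) ∂μ = 1 := by simpa only [sub_right_comm x u] using hu h0
    have hKint : Integrable (fun y => K (x - y - u)) μ := .of_integral_ne_zero (by simp [hK1])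
    refine ⟨hKint.const_mul (G u), ?_, ?_⟩
    · simp only [F, norm_mul, Real.norm_of_nonneg (hK0 _), integral_const_mul, hK1, mul_one]
    · simp only [F, integral_const_mul, hK1, mul_one]
  have hF : Integrable F (μ.prod volume) := by
    refine (integrable_prod_iff' ?_).mpr
      ⟨hsection.mono fun u h => h.1, hG.norm.congr (hsection.mono fun u h => h.2.1.symm)⟩
    exact hG.aestronglyMeasurable.comp_snd.mul (hK.comp (by fun_prop)).aestronglyMeasurable
  calc ∫ y, (∫ u, G u * K (x - y - u)) ∂μ = ∫ u, ∫ y, F (y, u) ∂μ :=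
        integral_integral_swap hF
    _ = ∫ u, G u := integral_congr_ae (hsection.mono fun u h => h.2.2)

theorem setIntegral_Icc_indicator_Ioi_sub {ρ : Measure ℝ} {k : ℝ → ℝ} {t x : ℝ}
    (hρt : ρ {t} = 0) (htx : t ≤ x) :
    ∫ y in Icc 0 x, (Ioi 0).indicator k (t - y) ∂ρ = ∫ y in Icc 0 t, k (t - y) ∂ρ := by
  have hind : (fun y => (Ioi 0).indicator k (t - y)) = (Iio t).indicator (fun y => k (t - y)) := by
    ext y; simp [indicator_apply, sub_pos]
  have hset : Icc 0 x ∩ Iio t = Ico 0 t := by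
    ext y; simp only [mem_inter_iff, mem_Icc, mem_Iio, mem_Ico]; grind
  rw [hind, setIntegral_indicator measurableSet_Iio, hset, integral_Icc_eq_integral_Ico' hρt]

theorem intervalIntegral_comp_sub_mul_eq_integral_indicator {f k : ℝ → ℝ} {d x : ℝ}
    (hd : 0 ≤ d) (hdx : d ≤ x) :
    ∫ s in 0..d, f (d - s) * k s =
      ∫ u, (Ioo 0 x).indicator f u * (Ioi 0).indicator k (d - u) := by
  calc ∫ s in 0..d, f (d - s) * k s = ∫ u in 0..d, f u * k (d - u) := by
        simpa using intervalIntegral.integral_comp_sub_left (a := 0) (b := d)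
          (fun u => f u * k (d - u)) d
    _ = ∫ u in Ioo 0 d, f u * k (d - u) := by
        rw [intervalIntegral.integral_of_le hd, integral_Ioc_eq_integral_Ioo]
    _ = ∫ u, (Ioo 0 d).indicator (fun u => f u * k (d - u)) u :=
        (integral_indicator measurableSet_Ioo).symm
    _ = _ := by
        congr 1; ext u
        simp only [indicator_apply, mem_Ioo, mem_Ioi, sub_pos]
        split_ifs <;> grind

theorem stmt6_general (k : ℝ → ℝ) (hk_nonneg : ∀ y > (0:ℝ), 0 ≤ k y) (hk_meas : Measurable k)
    (ρ : MeasureTheory.Measure ℝ) [SigmaFinite ρ]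
    (hSonine : ∀ t > (0:ℝ), ∫ s in Set.Icc (0:ℝ) t, k (t - s) ∂ρ = 1)
    (f f' : ℝ → ℝ) (hf' : MeasureTheory.LocallyIntegrableOn f' (Set.Ici 0))
    (hAC : ∀ x ≥ (0:ℝ), f x = f 0 + ∫ t in (0:ℝ)..x, f' t) :
    ∀ x > (0:ℝ),
      ∫ y in Set.Icc (0:ℝ) x,
        (∫ s in (0:ℝ)..(x - y), f' (x - y - s) * k s) ∂ρ = f x - f 0 := by
  intro x hx
  set G := (Ioo 0 x).indicator f'
  set K := (Ioi 0).indicator k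
  have hG : Integrable G := (integrable_indicator_iff measurableSet_Ioo).mpr <|
    (hf'.integrableOn_compact_subset Icc_subset_Ici_self isCompact_Icc).mono_set
      Ioo_subset_Icc_self
  have hK0 : ∀ z, 0 ≤ K z := fun z => by
    by_cases hz : 0 < z <;> simp [K, hz, hk_nonneg]
  have hGK : ∀ᵐ u, G u ≠ 0 → ∫ y in Icc 0 x, K (x - u - y) ∂ρ = 1 := by
    filter_upwards [ae_measure_singleton_sub_eq_zero ρ x] with u hu hGu
    have hux : u ∈ Ioo 0 x := by_contra fun h => hGu (indicator_of_notMem h _)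
    rw [setIntegral_Icc_indicator_Ioi_sub hu (by linarith [hux.1]), hSonine _ (by linarith [hux.2])]
  calc ∫ y in Icc 0 x, (∫ s in 0..(x - y), f' (x - y - s) * k s) ∂ρ
      = ∫ y in Icc 0 x, (∫ u, G u * K (x - y - u)) ∂ρ :=
        setIntegral_congr_fun measurableSet_Icc fun y hy =>
          intervalIntegral_comp_sub_mul_eq_integral_indicator (by linarith [hy.2])
            (by linarith [hy.1])
    _ = ∫ u, G u :=
        integral_integral_mul_sub_eq_integral hG (hk_meas.indicator measurableSet_Ioi) hK0 hGK
    _ = ∫ u in 0..x, f' u := by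
        rw [integral_indicator measurableSet_Ioo, intervalIntegral.integral_of_le hx.le,
          integral_Ioc_eq_integral_Ioo]
    _ = f x - f 0 := by rw [hAC x hx.le]; ring

/-- for a generalized Sonine pair `(k, ρ)` and an absolutely continuous `f`
(on `[0,∞)`, with a.e. derivative `f'`), `I_(k)(D_(k) f)(x) = f(x) − f(0)`. -/
theorem stmt6 (k : ℝ → ℝ) (hk_nonneg : ∀ y > (0:ℝ), 0 ≤ k y) (hk_meas : Measurable k)
    (hk_int : MeasureTheory.LocallyIntegrableOn k (Set.Ioi 0))
    (ρ : MeasureTheory.Measure ℝ) [SigmaFinite ρ] (hρ0 : ρ (Set.Iio 0) = 0)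
    (hSonine : ∀ t > (0:ℝ), ∫ s in Set.Icc (0:ℝ) t, k (t - s) ∂ρ = 1)
    (f f' : ℝ → ℝ) (hf' : MeasureTheory.LocallyIntegrableOn f' (Set.Ici 0))
    (hAC : ∀ x ≥ (0:ℝ), f x = f 0 + ∫ t in (0:ℝ)..x, f' t) :
    ∀ x > (0:ℝ),
      ∫ y in Set.Icc (0:ℝ) x,
        (∫ s in (0:ℝ)..(x - y), f' (x - y - s) * k s) ∂ρ = f x - f 0 :=
  stmt6_general k hk_nonneg hk_meas ρ hSonine f f' hf' hAC
end
end

section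
/- Let α ∈ (0,1), c > 1 and let ψ be a self-similar Bernstein function with respect to α and c which is strictly positive on (0,∞). Then the primitive G_I^*(x) := ∫₀^x 1/ψ(y) dy is a self-similar Bernstein function with respect to 1 − α ∈ (0,1) and d := c^{(1−α)/α} > 1; that is, G_I^* is a Bernstein function and G_I^*(d^{1/(1−α)} x) = d · G_I^*(x) for all x > 0. -/
open MeasureTheory Set Filter Real

noncomputable section

/-!
A Bernstein function `ψ` that is positive has a completely monotone reciprocal: differentiating
`ψ · (1/ψ) = 1` with Leibniz' rule expresses `(1/ψ)^(n+1)` through lower derivatives of `1/ψ` and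
derivatives of `ψ` with the right signs. The primitive of a completely monotone function that is
integrable at `0` is a Bernstein function. Integrability at `0` comes from self-similarity: iterating
`ψ(K x) = K^α ψ(x)` with `K = c^(1/α)` and using monotonicity gives `ψ(y) ≳ y^α` near `0`, and
`y^(-α)` is integrable since `α < 1`. Finally the substitution `y ↦ K y` turns
`ψ(K x) = K^α ψ(x)` into `G(K x) = K^(1-α) G(x)`, and `K^(1-α) = c^((1-α)/α)`.
-/

theorem iteratedDeriv_mul_of_isOpen {s : Set ℝ} (hs : IsOpen s) {f g : ℝ → ℝ} {n : ℕ}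
    (hf : ContDiffOn ℝ n f s) (hg : ContDiffOn ℝ n g s) {x : ℝ} (hx : x ∈ s) :
    iteratedDeriv n (fun y => f y * g y) x = ∑ i ∈ Finset.range (n + 1),
      (n.choose i : ℝ) * iteratedDeriv i f x * iteratedDeriv (n - i) g x := by
  have h := iteratedDerivWithin_mul hx hs.uniqueDiffOn (hf x hx) (hg x hx)
  simp only [iteratedDerivWithin_of_isOpen hs hx] at h
  exact h

theorem neg_one_pow_mul_iteratedDeriv_inv_nonneg {s : Set ℝ} (hs : IsOpen s) {f : ℝ → ℝ}
    (hf : ContDiffOn ℝ (⊤ : ℕ∞) f s) (hpos : ∀ x ∈ s, 0 < f x)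
    (hsign : ∀ n : ℕ, 0 < n → ∀ x ∈ s, 0 ≤ (-1 : ℝ) ^ (n - 1) * iteratedDeriv n f x) (n : ℕ) :
    ∀ x ∈ s, 0 ≤ (-1 : ℝ) ^ n * iteratedDeriv n (fun y => (f y)⁻¹) x := by
  induction n using Nat.strong_induction_on with | _ n IH => ?_
  intro x hx
  rcases n with _ | m
  · simpa using (hpos x hx).le
  set a : ℕ → ℝ := fun k => iteratedDeriv k (fun y => (f y)⁻¹) x
  set b : ℕ → ℝ := fun k => iteratedDeriv k f x
  have hinv : ContDiffOn ℝ (⊤ : ℕ∞) (fun y => (f y)⁻¹) s := hf.inv fun y hy => (hpos y hy).ne'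
  have hone : EqOn (fun y => (f y)⁻¹ * f y) (fun _ => 1) s :=
    fun y hy => inv_mul_cancel₀ (hpos y hy).ne'
  have hleibniz : ∑ k ∈ Finset.range (m + 2), ((m + 1).choose k : ℝ) * a k * b (m + 1 - k) = 0 := by
    rw [← iteratedDeriv_mul_of_isOpen hs (hinv.of_le (by exact_mod_cast le_top))
      (hf.of_le (by exact_mod_cast le_top)) hx, hone.iteratedDeriv_of_isOpen hs (m + 1) hx,
      iteratedDeriv_const, if_neg m.succ_ne_zero]
  rw [Finset.sum_range_succ, Nat.choose_self, Nat.sub_self] at hleibniz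
  -- By Leibniz' rule this sum equals `(-1)^(m+1) a (m+1) * f x`.
  have hlower : 0 ≤ ∑ k ∈ Finset.range (m + 1),
      ((m + 1).choose k : ℝ) * ((-1) ^ k * a k) * ((-1) ^ (m - k) * b (m + 1 - k)) := by
    refine Finset.sum_nonneg fun k hk => ?_
    have hk : k < m + 1 := Finset.mem_range.mp hk
    have hb := hsign (m + 1 - k) (by omega) x hx
    rw [show m + 1 - k - 1 = m - k by omega] at hb
    exact mul_nonneg (mul_nonneg (Nat.cast_nonneg _) (IH k hk x hx)) hb
  have hsigns : ∀ k ∈ Finset.range (m + 1),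
      ((m + 1).choose k : ℝ) * ((-1) ^ k * a k) * ((-1) ^ (m - k) * b (m + 1 - k))
        = (-1) ^ m * (((m + 1).choose k : ℝ) * a k * b (m + 1 - k)) := by
    intro k hk
    have hk : k ≤ m := Nat.lt_succ_iff.mp (Finset.mem_range.mp hk)
    rw [show (-1 : ℝ) ^ m = (-1) ^ k * (-1) ^ (m - k) by rw [← pow_add, Nat.add_sub_cancel' hk]]
    ring
  rw [Finset.sum_congr rfl hsigns, ← Finset.mul_sum, eq_neg_of_add_eq_zero_left hleibniz] at hlower
  refine nonneg_of_mul_nonneg_left ?_ (hpos x hx)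
  simp only [a, b, Nat.cast_one, one_mul, iteratedDeriv_zero] at hlower
  rw [pow_succ]
  linarith

theorem apply_pow_mul_of_apply_mul {ψ : ℝ → ℝ} {K c : ℝ} (hK : 0 < K)
    (hss : ∀ x > (0 : ℝ), ψ (K * x) = c * ψ x) (n : ℕ) :
    ∀ x > (0 : ℝ), ψ (K ^ n * x) = c ^ n * ψ x := by
  induction n with
  | zero => simp
  | succ n ih =>
    intro x hx
    rw [pow_succ, mul_assoc, ih (K * x) (by positivity), hss x hx, pow_succ, mul_assoc]

theorem mul_rpow_le_of_apply_mul {ψ : ℝ → ℝ} {K α : ℝ} (hK : 1 < K) (hα : 0 ≤ α)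
    (hmono : MonotoneOn ψ (Ioi 0)) (hnn : ∀ x > (0 : ℝ), 0 ≤ ψ x)
    (hss : ∀ x > (0 : ℝ), ψ (K * x) = K ^ α * ψ x) {x₀ y : ℝ} (hy : 0 < y) (hyx : y ≤ x₀) :
    ψ x₀ * y ^ α ≤ K ^ α * x₀ ^ α * ψ y := by
  have hK0 : 0 < K := one_pos.trans hK
  obtain ⟨n, hn_le, hn_lt⟩ := exists_nat_pow_near ((one_le_div hy).mpr hyx) hK
  rw [le_div_iff₀ hy] at hn_le
  rw [div_lt_iff₀ hy] at hn_lt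
  have hupper : ψ x₀ ≤ (K ^ α) ^ (n + 1) * ψ y := by
    rw [← apply_pow_mul_of_apply_mul hK0 hss (n + 1) y hy]
    exact hmono (hy.trans_le hyx) (show 0 < K ^ (n + 1) * y by positivity) hn_lt.le
  have hscale : (K ^ α) ^ n * y ^ α ≤ x₀ ^ α := by
    rw [Real.rpow_pow_comm hK0.le, ← Real.mul_rpow (by positivity) hy.le]
    exact Real.rpow_le_rpow (by positivity) hn_le hα
  calc ψ x₀ * y ^ α ≤ (K ^ α) ^ (n + 1) * ψ y * y ^ α := by gcongr
    _ = K ^ α * ψ y * ((K ^ α) ^ n * y ^ α) := by ring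
    _ ≤ K ^ α * ψ y * x₀ ^ α :=
      mul_le_mul_of_nonneg_left hscale (mul_nonneg (by positivity) (hnn y hy))
    _ = K ^ α * x₀ ^ α * ψ y := by ring

theorem intervalIntegrable_one_div_of_apply_mul {ψ : ℝ → ℝ} {K α : ℝ} (hK : 1 < K)
    (hα₀ : 0 ≤ α) (hα₁ : α < 1) (hcont : ContinuousOn ψ (Ioi 0)) (hmono : MonotoneOn ψ (Ioi 0))
    (hpos : ∀ x > (0 : ℝ), 0 < ψ x) (hss : ∀ x > (0 : ℝ), ψ (K * x) = K ^ α * ψ x)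
    {x₀ : ℝ} (hx₀ : 0 < x₀) :
    IntervalIntegrable (fun y => 1 / ψ y) volume 0 x₀ := by
  have hψx₀ := hpos x₀ hx₀
  rw [intervalIntegrable_iff_integrableOn_Ioc_of_le hx₀.le]
  have hdom : IntegrableOn (fun y => K ^ α * x₀ ^ α / ψ x₀ * y ^ (-α)) (Ioc 0 x₀) := by
    have := (intervalIntegral.intervalIntegrable_rpow' (a := 0) (b := x₀) (r := -α)
      (by linarith)).const_mul (K ^ α * x₀ ^ α / ψ x₀)
    rwa [intervalIntegrable_iff_integrableOn_Ioc_of_le hx₀.le] at this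
  have hmeas : AEStronglyMeasurable (fun y => 1 / ψ y) (volume.restrict (Ioc 0 x₀)) :=
    (continuousOn_const.div (hcont.mono Ioc_subset_Ioi_self) fun y hy => (hpos y hy.1).ne')
      |>.aestronglyMeasurable measurableSet_Ioc
  refine Integrable.mono' hdom hmeas ((ae_restrict_iff' measurableSet_Ioc).mpr
    (Eventually.of_forall fun y hy => ?_))
  have hψy := hpos y hy.1
  have hyα : 0 < y ^ α := Real.rpow_pos_of_pos hy.1 α
  calc ‖1 / ψ y‖ = 1 / ψ y := Real.norm_of_nonneg (one_div_pos.mpr hψy).le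
    _ ≤ K ^ α * x₀ ^ α / (ψ x₀ * y ^ α) := by
      rw [div_le_div_iff₀ hψy (by positivity), one_mul]
      exact mul_rpow_le_of_apply_mul hK hα₀ hmono (fun x hx => (hpos x hx).le) hss hy.1 hy.2
    _ = K ^ α * x₀ ^ α / ψ x₀ * y ^ (-α) := by
      rw [Real.rpow_neg hy.1.le]
      field_simp

theorem IsBernstein.monotoneOn {ψ : ℝ → ℝ} (hψ : IsBernstein ψ) : MonotoneOn ψ (Ioi 0) := by
  obtain ⟨hsmooth, -, hsign⟩ := hψ
  refine monotoneOn_of_deriv_nonneg (convex_Ioi 0) hsmooth.continuousOn ?_ fun x hx => ?_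
  · rw [interior_Ioi]
    exact hsmooth.differentiableOn (by simp)
  · rw [interior_Ioi] at hx
    simpa using hsign 1 one_pos x hx

theorem isBernstein_primitive_of_completelyMonotone {g : ℝ → ℝ}
    (hg : ContDiffOn ℝ (⊤ : ℕ∞) g (Ioi 0)) (hint : ∀ x > (0 : ℝ), IntervalIntegrable g volume 0 x)
    (hcm : ∀ n : ℕ, ∀ x > (0 : ℝ), 0 ≤ (-1 : ℝ) ^ n * iteratedDeriv n g x) :
    IsBernstein (fun x => ∫ y in (0 : ℝ)..x, g y) := by
  have hderiv : ∀ x ∈ Ioi (0 : ℝ), HasDerivAt (fun x => ∫ y in (0 : ℝ)..x, g y) (g x) x :=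
    fun x hx => intervalIntegral.integral_hasDerivAt_right (hint x hx)
      (hg.continuousOn.stronglyMeasurableAtFilter isOpen_Ioi x hx)
      (hg.continuousOn.continuousAt (isOpen_Ioi.mem_nhds hx))
  have hderiv_eq : EqOn (deriv fun x => ∫ y in (0 : ℝ)..x, g y) g (Ioi 0) :=
    fun x hx => (hderiv x hx).deriv
  refine ⟨?_, fun x hx => ?_, fun n hn x hx => ?_⟩
  · rw [contDiffOn_infty_iff_deriv_of_isOpen isOpen_Ioi]
    exact ⟨fun x hx => (hderiv x hx).differentiableAt.differentiableWithinAt,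
      hg.congr hderiv_eq⟩
  · dsimp only
    rw [intervalIntegral.integral_of_le hx.le]
    exact setIntegral_nonneg measurableSet_Ioc fun y hy => by simpa using hcm 0 y hy.1
  · obtain ⟨m, rfl⟩ := Nat.exists_eq_add_one_of_ne_zero hn.ne'
    rw [iteratedDeriv_succ', hderiv_eq.iteratedDeriv_of_isOpen isOpen_Ioi m hx]
    exact hcm m x hx

theorem intervalIntegral_mul_of_apply_mul {g : ℝ → ℝ} {K a : ℝ} (hK : 0 < K)
    (hg : ∀ y > (0 : ℝ), g (K * y) = a * g y) {x : ℝ} (hx : 0 ≤ x) :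
    ∫ y in (0 : ℝ)..K * x, g y = K * a * ∫ y in (0 : ℝ)..x, g y := by
  have hsubst := intervalIntegral.integral_comp_mul_left (a := 0) (b := x) g hK.ne'
  rw [mul_zero, smul_eq_mul, intervalIntegral.integral_congr_ae (g := fun y => a * g y)
    (Eventually.of_forall fun y hy => hg y (by rw [uIoc_of_le hx] at hy; exact hy.1)),
    intervalIntegral.integral_const_mul] at hsubst
  rw [mul_assoc, hsubst, mul_inv_cancel_left₀ hK.ne']

theorem isBernstein_primitive_one_div_of_apply_mul {ψ : ℝ → ℝ} {K α : ℝ} (hK : 1 < K)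
    (hα₀ : 0 ≤ α) (hα₁ : α < 1) (hψ : IsBernstein ψ) (hpos : ∀ x > (0 : ℝ), 0 < ψ x)
    (hss : ∀ x > (0 : ℝ), ψ (K * x) = K ^ α * ψ x) :
    IsBernstein (fun x => ∫ y in (0 : ℝ)..x, 1 / ψ y) := by
  refine isBernstein_primitive_of_completelyMonotone
    (contDiffOn_const.div hψ.1 fun y hy => (hpos y hy).ne') (fun x hx => ?_) fun n x hx => ?_
  · exact intervalIntegrable_one_div_of_apply_mul hK hα₀ hα₁ hψ.1.continuousOn hψ.monotoneOn
      hpos hss hx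
  · simpa only [one_div] using
      neg_one_pow_mul_iteratedDeriv_inv_nonneg isOpen_Ioi hψ.1 hpos hψ.2.2 n x hx

theorem primitive_one_div_apply_mul {ψ : ℝ → ℝ} {K α : ℝ} (hK : 0 < K)
    (hss : ∀ x > (0 : ℝ), ψ (K * x) = K ^ α * ψ x) {x : ℝ} (hx : 0 ≤ x) :
    ∫ y in (0 : ℝ)..K * x, 1 / ψ y = K ^ (1 - α) * ∫ y in (0 : ℝ)..x, 1 / ψ y := by
  have hinv_scaling : ∀ y > (0 : ℝ), 1 / ψ (K * y) = K ^ (-α) * (1 / ψ y) := fun y hy => by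
    rw [hss y hy, Real.rpow_neg hK.le, one_div, one_div, mul_inv]
  rw [intervalIntegral_mul_of_apply_mul hK hinv_scaling hx, sub_eq_add_neg,
    Real.rpow_add hK, Real.rpow_one]

/-- the primitive of `1/ψ` is a self-similar Bernstein function with
respect to `1 − α` and `d = c^((1−α)/α)`. -/
theorem stmt7 (α c : ℝ) (hα : α ∈ Set.Ioo (0:ℝ) 1) (hc : 1 < c) (ψ : ℝ → ℝ)
    (hψ : IsSelfSimilarBernstein ψ α c) (hpos : ∀ x > (0:ℝ), 0 < ψ x) :
    (1 - α) ∈ Set.Ioo (0:ℝ) 1 ∧ 1 < c ^ ((1 - α)/α) ∧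
    IsSelfSimilarBernstein (fun x : ℝ => ∫ y in (0:ℝ)..x, 1 / ψ y)
      (1 - α) (c ^ ((1 - α)/α)) := by
  obtain ⟨hbern, hss⟩ := hψ
  obtain ⟨hα₀, hα₁⟩ := hα
  have hc₀ : 0 < c := one_pos.trans hc
  set K := c ^ (1 / α)
  have hK : 1 < K := Real.one_lt_rpow hc (by positivity)
  have hKα : K ^ α = c := by
    simp only [K, one_div]
    exact Real.rpow_inv_rpow hc₀.le hα₀.ne'
  have hd : c ^ ((1 - α) / α) = K ^ (1 - α) := by
    rw [← Real.rpow_mul hc₀.le, one_div_mul_eq_div]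
  have hdK : (K ^ (1 - α)) ^ (1 / (1 - α)) = K := by
    rw [← Real.rpow_mul (by positivity), mul_one_div_cancel (by linarith), Real.rpow_one]
  rw [← hKα] at hss
  refine ⟨⟨by linarith, by linarith⟩, Real.one_lt_rpow hc (by positivity),
    isBernstein_primitive_one_div_of_apply_mul hK hα₀.le hα₁ hbern hpos hss, fun x hx => ?_⟩
  rw [hd, hdK]
  exact primitive_one_div_apply_mul (by positivity) hss hx.le
end
end

section
/- Let α ∈ (0,1), d > 1, let σ be a continuously differentiable admissable function with respect to 1 − α and d, and let μ be the Borel measure on (0,∞) with μ((t,∞)) = t^{α−1} σ(log t) for all t > 0. Define G_I^*(x) = ∫₀^∞ (1 − e^{−xt}) dμ(t) for x > 0. Then the kernel k^*(t) := t^{α−1}((1 − α) σ(log t) − σ′(log t)) is non-negative for all t > 0, and the derivative of G_I^* satisfies (G_I^*)′(x) = ∫₀^∞ e^{−xt} k^*(t) dt for all x > 0. -/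
/-!
Write `F t = t ^ (α - 1) * σ (log t)` for the tail of `μ`, so that `F' t = -k* t / t`; as `F` is
antitone, `k*` is non-negative. Periodicity makes `σ` and `σ'` bounded, hence `F` and `k*` are
`O(t ^ (α - 1))`. The layer-cake formula gives `G_I^* x = ∫₀^∞ x e^(-xs) F s ds`, which may be
differentiated under the integral sign, and integrating `(1 - xs) e^(-xs) F s` by parts against
`s F s e^(-xs)`, which vanishes at `0` and at `∞`, yields `∫₀^∞ e^(-xs) k* s ds`.
-/

open MeasureTheory Set Filter Real

noncomputable section

open Topology

theorem Function.Periodic.deriv {f : ℝ → ℝ} {c : ℝ} (hf : Function.Periodic f c) :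
    Function.Periodic (deriv f) c := fun y => by
  rw [← deriv_comp_add_const, funext hf]

theorem Function.Periodic.exists_abs_rpow_mul_comp_log_le {g : ℝ → ℝ} {c : ℝ}
    (hg : Function.Periodic g c) (hc : c ≠ 0) (hcont : Continuous g) (β : ℝ) :
    ∃ C, ∀ s > (0:ℝ), |s ^ β * g (Real.log s)| ≤ C * s ^ β := by
  obtain ⟨C, hC⟩ := isBounded_iff_forall_norm_le.mp (hg.isBounded_of_continuous hc hcont)
  refine ⟨C, fun s hs => ?_⟩
  rw [abs_mul, abs_of_pos (rpow_pos_of_pos hs β), mul_comm]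
  exact mul_le_mul_of_nonneg_right (hC _ (mem_range_self _)) (rpow_nonneg hs.le β)

theorem hasDerivAt_rpow_mul_comp_log {g : ℝ → ℝ} (hg : Differentiable ℝ g) (β : ℝ) {t : ℝ}
    (ht : 0 < t) :
    HasDerivAt (fun s => s ^ β * g (Real.log s))
      (t ^ β * (β * g (Real.log t) + deriv g (Real.log t)) / t) t := by
  have hpow := hasDerivAt_rpow_const (p := β) (Or.inl ht.ne')
  have hlog := (hg (Real.log t)).hasDerivAt.comp t (hasDerivAt_log ht.ne')
  refine (hpow.mul hlog).congr_deriv ?_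
  rw [Function.comp_apply, rpow_sub_one ht.ne']
  field_simp

theorem integrableOn_rpow_mul_exp_neg_mul {r b : ℝ} (hr : -1 < r) (hb : 0 < b) :
    IntegrableOn (fun s : ℝ => s ^ r * exp (-(b * s))) (Ioi 0) := by
  simpa [rpow_one] using integrableOn_rpow_mul_exp_neg_mul_rpow hr one_pos hb

theorem integrableOn_Ioi_of_abs_le_rpow_mul_exp {f : ℝ → ℝ} {C r b : ℝ} (hr : -1 < r)
    (hb : 0 < b) (hf : AEStronglyMeasurable f (volume.restrict (Ioi 0)))
    (hle : ∀ s > (0:ℝ), |f s| ≤ C * (s ^ r * exp (-(b * s)))) :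
    IntegrableOn f (Ioi 0) :=
  ((integrableOn_rpow_mul_exp_neg_mul hr hb).const_mul C).mono' hf
    ((ae_restrict_iff' measurableSet_Ioi).mpr (ae_of_all _ hle))

theorem one_add_mul_exp_neg_le (u : ℝ) : (1 + u) * exp (-u) ≤ 2 * exp (-(u / 2)) := by
  have h := add_one_le_exp (u / 2)
  have hsplit : exp (-u) = exp (-(u / 2)) * exp (-(u / 2)) := by rw [← exp_add]; ring_nf
  have hinv : exp (u / 2) * exp (-(u / 2)) = 1 := by rw [← exp_add]; simp
  rw [hsplit]
  nlinarith [exp_pos (-(u / 2))]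

theorem abs_one_sub_mul_mul_exp_mul_le {a C r s y b : ℝ} (hs : 0 ≤ s) (hb : 0 ≤ b)
    (hby : 2 * b ≤ y) (ha : |a| ≤ C * s ^ r) :
    |(1 - y * s) * exp (-(y * s)) * a| ≤ 2 * C * (s ^ r * exp (-(b * s))) := by
  have hys : 0 ≤ y * s := mul_nonneg (by linarith) hs
  have hC : 0 ≤ C * s ^ r := (abs_nonneg _).trans ha
  calc |(1 - y * s) * exp (-(y * s)) * a|
      ≤ (1 + y * s) * exp (-(y * s)) * (C * s ^ r) := by
        rw [abs_mul, abs_mul, abs_exp]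
        gcongr
        exact abs_le.mpr ⟨by linarith, by linarith⟩
    _ ≤ 2 * exp (-(y * s / 2)) * (C * s ^ r) :=
        mul_le_mul_of_nonneg_right (one_add_mul_exp_neg_le _) hC
    _ ≤ 2 * exp (-(b * s)) * (C * s ^ r) := by
        gcongr
        nlinarith
    _ = 2 * C * (s ^ r * exp (-(b * s))) := by ring

theorem intervalIntegral_mul_exp_neg_mul (x t : ℝ) :
    ∫ s in (0:ℝ)..t, x * exp (-(x * s)) = 1 - exp (-(x * t)) := by
  have hderiv (s : ℝ) (_ : s ∈ uIcc 0 t) :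
      HasDerivAt (fun u => -exp (-(x * u))) (x * exp (-(x * s))) s :=
    (((hasDerivAt_id' s).const_mul x).fun_neg.exp).fun_neg.congr_deriv (by ring)
  rw [intervalIntegral.integral_eq_sub_of_hasDerivAt hderiv
    (Continuous.intervalIntegrable (by fun_prop) _ _)]
  simp only [mul_zero, neg_zero, exp_zero, sub_neg_eq_add]
  ring

theorem setIntegral_Ioi_one_sub_exp_eq_of_tail {μ : Measure ℝ} {F : ℝ → ℝ} (hF : Measurable F)
    (hF_nonneg : ∀ s > (0:ℝ), 0 ≤ F s)
    (htail : ∀ s > (0:ℝ), μ (Ioi s) = ENNReal.ofReal (F s)) {x : ℝ} (hx : 0 < x) :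
    ∫ t in Ioi 0, (1 - exp (-(x * t))) ∂μ = ∫ s in Ioi 0, x * exp (-(x * s)) * F s := by
  have hlayer := lintegral_comp_eq_lintegral_meas_lt_mul (μ.restrict (Ioi 0)) (f := id)
    (g := fun s => x * exp (-(x * s)))
    ((ae_restrict_iff' measurableSet_Ioi).mpr (ae_of_all _ fun t ht => le_of_lt ht))
    aemeasurable_id (fun _ _ => Continuous.intervalIntegrable (by fun_prop) _ _)
    (ae_of_all _ fun s => by positivity)
  simp only [id, intervalIntegral_mul_exp_neg_mul] at hlayer
  rw [integral_eq_lintegral_of_nonneg_ae, integral_eq_lintegral_of_nonneg_ae, hlayer]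
  · congr 1
    refine setLIntegral_congr_fun measurableSet_Ioi fun s hs => ?_
    rw [Measure.restrict_apply' measurableSet_Ioi]
    change μ (Ioi s ∩ Ioi 0) * _ = _
    rw [inter_eq_left.mpr (Ioi_subset_Ioi (le_of_lt hs)), htail s hs, mul_comm,
      ENNReal.ofReal_mul (p := x * exp (-(x * s))) (by positivity)]
  · exact (ae_restrict_iff' measurableSet_Ioi).mpr (ae_of_all _ fun s hs =>
      mul_nonneg (by positivity) (hF_nonneg s hs))
  · exact (by fun_prop : Measurable fun s => x * exp (-(x * s)) * F s).aestronglyMeasurable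
  · exact (ae_restrict_iff' measurableSet_Ioi).mpr (ae_of_all _ fun t ht =>
      sub_nonneg.mpr (exp_le_one_iff.mpr (by nlinarith [mem_Ioi.mp ht])))
  · exact (by fun_prop : Continuous fun t => 1 - exp (-(x * t))).aestronglyMeasurable

theorem hasDerivAt_setIntegral_mul_exp_neg_mul {F : ℝ → ℝ} {C r x : ℝ} (hr : -1 < r)
    (hx : 0 < x) (hF : Measurable F) (hFle : ∀ s > (0:ℝ), |F s| ≤ C * s ^ r) :
    HasDerivAt (fun y => ∫ s in Ioi 0, y * exp (-(y * s)) * F s)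
      (∫ s in Ioi 0, (1 - x * s) * exp (-(x * s)) * F s) x := by
  have hball : ∀ y ∈ Metric.ball x (x / 2), x / 2 < y := fun y hy => by
    rw [Metric.mem_ball, Real.dist_eq, abs_lt] at hy
    linarith [hy.1]
  have hderiv := hasDerivAt_integral_of_dominated_loc_of_deriv_le
    (μ := volume.restrict (Ioi 0)) (F := fun y s => y * exp (-(y * s)) * F s)
    (F' := fun y s => (1 - y * s) * exp (-(y * s)) * F s)
    (Metric.ball_mem_nhds x (half_pos hx))
    (Eventually.of_forall fun y =>
      (by fun_prop : Measurable fun s => y * exp (-(y * s)) * F s).aestronglyMeasurable)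
    (integrableOn_Ioi_of_abs_le_rpow_mul_exp (C := x * C) hr hx (by fun_prop) fun s hs => by
      rw [abs_mul, abs_mul, abs_of_pos hx, abs_exp,
        show x * C * (s ^ r * exp (-(x * s))) = x * exp (-(x * s)) * (C * s ^ r) by ring]
      gcongr
      exact hFle s hs)
    (by fun_prop : Measurable fun s => (1 - x * s) * exp (-(x * s)) * F s).aestronglyMeasurable
    ((ae_restrict_iff' measurableSet_Ioi).mpr (ae_of_all _ fun s hs y hy =>
      abs_one_sub_mul_mul_exp_mul_le (b := x / 4) (le_of_lt hs) (by positivity)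
        (by linarith [hball y hy]) (hFle s hs)))
    ((integrableOn_rpow_mul_exp_neg_mul (b := x / 4) hr (by positivity)).const_mul (2 * C))
    (ae_of_all _ fun s y _ =>
      (((hasDerivAt_id' y).mul ((hasDerivAt_id' y).mul_const s).fun_neg.exp).mul_const
        (F s)).congr_deriv (by ring))
  exact hderiv.2

theorem setIntegral_Ioi_one_sub_mul_mul_exp_mul_eq {F k : ℝ → ℝ} {C D r x : ℝ} (hr : -1 < r)
    (hx : 0 < x) (hF : ∀ s > (0:ℝ), HasDerivAt F (-k s / s) s) (hk : Measurable k)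
    (hFle : ∀ s > (0:ℝ), |F s| ≤ C * s ^ r) (hkle : ∀ s > (0:ℝ), |k s| ≤ D * s ^ r) :
    ∫ s in Ioi 0, (1 - x * s) * exp (-(x * s)) * F s = ∫ s in Ioi 0, exp (-(x * s)) * k s := by
  set Φ : ℝ → ℝ := fun s => s * F s * exp (-(x * s))
  have hΦderiv : ∀ s ∈ Ioi (0:ℝ), HasDerivAt Φ
      ((1 - x * s) * exp (-(x * s)) * F s - exp (-(x * s)) * k s) s := fun s hs => by
    have hs0 : s ≠ 0 := (mem_Ioi.mp hs).ne'
    exact (((hasDerivAt_id' s).fun_mul (hF s hs)).fun_mul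
      ((hasDerivAt_id' s).const_mul x).fun_neg.exp).congr_deriv (by field_simp; ring)
  have hΦle : ∀ s > (0:ℝ), ‖Φ s‖ ≤ C * (s ^ (r + 1) * exp (-(x * s))) := fun s hs => by
    rw [Real.norm_eq_abs, abs_mul, abs_mul, abs_exp, abs_of_pos hs, rpow_add_one hs.ne',
      show C * (s ^ r * s * exp (-(x * s))) = s * (C * s ^ r) * exp (-(x * s)) by ring]
    gcongr
    exact hFle s hs
  have hg : Continuous fun s => s ^ (r + 1) * exp (-(x * s)) :=
    (continuous_rpow_const (by linarith)).mul (by fun_prop)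
  have hΦzero : ContinuousWithinAt Φ (Ici 0) 0 := by
    have hΦ0 : Φ 0 = 0 := by simp [Φ]
    refine continuousWithinAt_Ioi_iff_Ici.mp ?_
    rw [ContinuousWithinAt, hΦ0]
    refine squeeze_zero_norm' (eventually_nhdsWithin_of_forall hΦle) ?_
    simpa [zero_rpow (by linarith : r + 1 ≠ 0)] using
      ((hg.const_mul C).tendsto 0).mono_left nhdsWithin_le_nhds
  have hΦtop : Tendsto Φ atTop (𝓝 0) := by
    refine squeeze_zero_norm' ((eventually_gt_atTop 0).mono hΦle) ?_
    simpa [neg_mul] using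
      (tendsto_rpow_mul_exp_neg_mul_atTop_nhds_zero (r + 1) x hx).const_mul C
  have hFcont : ContinuousOn F (Ioi 0) := fun s hs => (hF s hs).continuousAt.continuousWithinAt
  have hA : IntegrableOn (fun s => (1 - x * s) * exp (-(x * s)) * F s) (Ioi 0) :=
    integrableOn_Ioi_of_abs_le_rpow_mul_exp hr (half_pos hx)
      ((Continuous.continuousOn (by fun_prop)).mul hFcont |>.aestronglyMeasurable
        measurableSet_Ioi)
      fun s hs => abs_one_sub_mul_mul_exp_mul_le hs.le (by positivity) (by linarith) (hFle s hs)
  have hB : IntegrableOn (fun s => exp (-(x * s)) * k s) (Ioi 0) :=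
    integrableOn_Ioi_of_abs_le_rpow_mul_exp hr hx (by fun_prop) fun s hs => by
      rw [abs_mul, abs_exp, show D * (s ^ r * exp (-(x * s))) = exp (-(x * s)) * (D * s ^ r) by
        ring]
      gcongr
      exact hkle s hs
  have h := integral_Ioi_of_hasDerivAt_of_tendsto hΦzero hΦderiv (hA.sub hB) hΦtop
  rwa [integral_sub hA hB, show Φ 0 = 0 by simp [Φ], sub_zero, sub_eq_zero] at h

theorem stmt8_general (α d : ℝ) (hα : α ∈ Set.Ioo (0:ℝ) 1) (hd : 1 < d) (σ : ℝ → ℝ)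
    (hσC1 : ContDiff ℝ 1 σ) (hσ : IsAdmissable σ (1 - α) d)
    (μ : MeasureTheory.Measure ℝ)
    (hμtail : ∀ t > (0:ℝ), μ (Set.Ioi t) = ENNReal.ofReal (t ^ (α - 1) * σ (Real.log t))) :
    (∀ t > (0:ℝ),
      0 ≤ t ^ (α - 1) * ((1 - α) * σ (Real.log t) - deriv σ (Real.log t))) ∧
    ∀ x > (0:ℝ),
      deriv (fun x : ℝ => ∫ t in Set.Ioi (0:ℝ), (1 - Real.exp (-(x * t))) ∂μ) x
        = ∫ t in Set.Ioi (0:ℝ), Real.exp (-(x * t)) *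
            (t ^ (α - 1) * ((1 - α) * σ (Real.log t) - deriv σ (Real.log t))) := by
  obtain ⟨hα0, hα1⟩ := hα
  obtain ⟨hσpos, hσanti, hσper⟩ := hσ
  rw [neg_sub] at hσanti
  set F : ℝ → ℝ := fun t => t ^ (α - 1) * σ (log t)
  set k : ℝ → ℝ := fun t => t ^ (α - 1) * ((1 - α) * σ (log t) - deriv σ (log t))
  have hσm : Measurable σ := hσC1.continuous.measurable
  have hFderiv : ∀ t > (0:ℝ), HasDerivAt F (-k t / t) t := fun t ht =>
    (hasDerivAt_rpow_mul_comp_log (hσC1.differentiable one_ne_zero) (α - 1) ht).congr_deriv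
      (by ring)
  have hk : ∀ t > (0:ℝ), 0 ≤ k t := fun t ht => by
    have hacc : AccPt t (𝓟 (Ioi 0)) := by
      simpa using (PerfectSpace.univ_preperfect t (mem_univ t)).nhds_inter (Ioi_mem_nhds ht)
    have h := (hFderiv t ht).hasDerivWithinAt.nonpos_of_antitoneOn hacc hσanti
    rw [neg_div, neg_nonpos] at h
    simpa using (le_div_iff₀ ht).mp h
  have hc : log (d ^ (1 / (1 - α))) ≠ 0 := by
    rw [log_rpow (by linarith)]
    exact mul_ne_zero (one_div_ne_zero (by linarith)) (log_pos hd).ne'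
  obtain ⟨C, hC⟩ := hσper.exists_abs_rpow_mul_comp_log_le hc hσC1.continuous (α - 1)
  obtain ⟨D, hD⟩ := Function.Periodic.exists_abs_rpow_mul_comp_log_le
    (g := fun y => (1 - α) * σ y - deriv σ y) (fun y => by simp only [hσper y, hσper.deriv y])
    hc (by fun_prop) (α - 1)
  refine ⟨hk, fun x hx => ?_⟩
  have hG : (fun y => ∫ t in Ioi 0, (1 - exp (-(y * t))) ∂μ)
      =ᶠ[𝓝 x] fun y => ∫ s in Ioi 0, y * exp (-(y * s)) * F s :=
    eventually_of_mem (Ioi_mem_nhds hx) fun y hy =>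
      setIntegral_Ioi_one_sub_exp_eq_of_tail (by fun_prop)
        (fun s hs => mul_nonneg (rpow_nonneg hs.le _) (hσpos _).le) hμtail hy
  rw [hG.deriv_eq,
    (hasDerivAt_setIntegral_mul_exp_neg_mul (by linarith) hx (by fun_prop) hC).deriv]
  exact setIntegral_Ioi_one_sub_mul_mul_exp_mul_eq (by linarith) hx hFderiv (by fun_prop) hC hD

/-- the Sonine kernel `k*(t) = t^(α−1)((1−α)σ(log t) − σ'(log t))` is
non-negative and `(G_I^*)' (x) = ∫₀^∞ e^(−xt) k*(t) dt`. -/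
theorem stmt8 (α d : ℝ) (hα : α ∈ Set.Ioo (0:ℝ) 1) (hd : 1 < d) (σ : ℝ → ℝ)
    (hσC1 : ContDiff ℝ 1 σ) (hσ : IsAdmissable σ (1 - α) d)
    (μ : MeasureTheory.Measure ℝ)
    (hμ : μ (Set.Iic 0) = 0)
    (hμtail : ∀ t > (0:ℝ), μ (Set.Ioi t) = ENNReal.ofReal (t ^ (α - 1) * σ (Real.log t))) :
    (∀ t > (0:ℝ),
      0 ≤ t ^ (α - 1) * ((1 - α) * σ (Real.log t) - deriv σ (Real.log t))) ∧
    ∀ x > (0:ℝ),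
      deriv (fun x : ℝ => ∫ t in Set.Ioi (0:ℝ), (1 - Real.exp (-(x * t))) ∂μ) x
        = ∫ t in Set.Ioi (0:ℝ), Real.exp (-(x * t)) *
            (t ^ (α - 1) * ((1 - α) * σ (Real.log t) - deriv σ (Real.log t))) :=
  stmt8_general α d hα hd σ hσC1 hσ μ hμtail
end
end

section
/- Let ψ be a Bernstein function with lim_{x↓0} ψ(x) = 0 and ψ(1) > 0. Then the numbers p_j := (−1)^{j−1} ψ^{(j)}(1) / (j! · ψ(1)) satisfy p_j ≥ 0 for all j ∈ ℕ and ∑_{j=1}^∞ p_j = 1; hence they define a probability distribution on the positive integers (the semi-fractional Sibuya distribution associated to ψ). -/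
/-!
Reflected at `c > 0`, a Bernstein function `ψ` becomes `h y = -ψ (c - y)`, whose derivatives of
every positive order are nonnegative on `[0, c)`. For such `h` the Taylor terms at `0` are
nonnegative, and since `y - t ≤ (y / z) (z - t)` on `[0, y]`, the integral remainder at `y` is at
most `(y / z)ⁿ` times the remainder at any `z ∈ (y, c)`, which in turn is at most `h z - h 0`. Hence
the Taylor series converges (Bernstein's theorem on absolutely monotone functions): for
`0 < y < 1`, `∑ⱼ ψ(1) pⱼ y^(j+1) = ψ 1 - ψ (1 - y)`. The coefficients being nonnegative, letting
`y → 1` and using `ψ(0+) = 0` gives `∑ⱼ ψ(1) pⱼ = ψ 1`.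
-/

open MeasureTheory Set Filter Real

noncomputable section

open scoped Nat ContDiff Topology
open Finset (range)

theorem taylor_integral_remainder_iteratedDeriv {f : ℝ → ℝ} {s : Set ℝ} {x₀ x : ℝ} {n : ℕ}
    (hs : IsOpen s) (hf : ContDiffOn ℝ (n + 1 : ℕ) f s) (hx : uIcc x₀ x ⊆ s) :
    f x - f x₀ - ∑ k ∈ range n, iteratedDeriv (k + 1) f x₀ / ((k + 1) ! : ℝ) * (x - x₀) ^ (k + 1) =
      (n ! : ℝ)⁻¹ * ∫ t in x₀..x, (x - t) ^ n * iteratedDeriv (n + 1) f t := by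
  rcases eq_or_ne x₀ x with rfl | hne
  · simp
  have hderiv : ∀ k ≤ n + 1, ∀ t ∈ uIcc x₀ x,
      iteratedDerivWithin k f (uIcc x₀ x) t = iteratedDeriv k f t := fun k hk t ht =>
    iteratedDerivWithin_eq_iteratedDeriv (uniqueDiffOn_uIcc hne)
      ((hf.contDiffAt (hs.mem_nhds (hx ht))).of_le (by exact_mod_cast hk)) ht
  have h := taylor_integral_remainder (hf.mono hx)
  rw [taylor_within_apply, Finset.sum_range_succ', sub_add_eq_sub_sub_swap] at h
  convert h using 1
  · congr 1
    · simp [hderiv 0 (Nat.zero_le _) x₀ left_mem_uIcc]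
    refine Finset.sum_congr rfl fun k hk => ?_
    rw [hderiv (k + 1) (by simp at hk; omega) x₀ left_mem_uIcc, smul_eq_mul]
    ring
  · rw [← intervalIntegral.integral_const_mul]
    refine intervalIntegral.integral_congr fun t ht => ?_
    simp only [smul_eq_mul, hderiv (n + 1) le_rfl t ht]
    ring

theorem ContDiffOn.continuousOn_iteratedDeriv_of_isOpen {𝕜 F : Type*} [NontriviallyNormedField 𝕜]
    [NormedAddCommGroup F] [NormedSpace 𝕜 F] {f : 𝕜 → F} {s : Set 𝕜} {n : WithTop ℕ∞} {m : ℕ}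
    (hf : ContDiffOn 𝕜 n f s) (hmn : m ≤ n) (hs : IsOpen s) :
    ContinuousOn (iteratedDeriv m f) s :=
  (hf.continuousOn_iteratedDerivWithin hmn hs.uniqueDiffOn).congr fun _ hx =>
    (iteratedDerivWithin_of_isOpen hs hx).symm

theorem integral_sub_pow_mul_le_mul_integral {g : ℝ → ℝ} {a y z : ℝ} (n : ℕ)
    (hg : ContinuousOn g (Icc a z)) (hg0 : ∀ t ∈ Icc a z, 0 ≤ g t) (hay : a ≤ y) (hyz : y < z) :
    ∫ t in a..y, (y - t) ^ n * g t ≤ ((y - a) / (z - a)) ^ n * ∫ t in a..z, (z - t) ^ n * g t := by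
  have haz : 0 < z - a := by linarith
  have hint : ∀ c u, a ≤ u → u ≤ z →
      IntervalIntegrable (fun t => (c - t) ^ n * g t) volume a u := fun c u hau huz =>
    ContinuousOn.intervalIntegrable <| ((continuousOn_const.sub continuousOn_id).pow n).mul
      (hg.mono (by rw [uIcc_of_le hau]; exact Icc_subset_Icc_right huz))
  have hkernel : ∀ t ∈ Icc a y, y - t ≤ (y - a) / (z - a) * (z - t) := fun t ht => by
    rw [div_mul_eq_mul_div, le_div_iff₀ haz]
    nlinarith [ht.1]
  calc ∫ t in a..y, (y - t) ^ n * g t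
      ≤ ∫ t in a..y, ((y - a) / (z - a)) ^ n * ((z - t) ^ n * g t) := by
        refine intervalIntegral.integral_mono_on hay (hint y y hay hyz.le)
          ((hint z y hay hyz.le).const_mul _) fun t ht => ?_
        rw [← mul_assoc, ← mul_pow]
        exact mul_le_mul_of_nonneg_right (pow_le_pow_left₀ (by linarith [ht.2]) (hkernel t ht) n)
          (hg0 t ⟨ht.1, ht.2.trans hyz.le⟩)
    _ = ((y - a) / (z - a)) ^ n * ∫ t in a..y, (z - t) ^ n * g t :=
        intervalIntegral.integral_const_mul _ _
    _ ≤ ((y - a) / (z - a)) ^ n * ∫ t in a..z, (z - t) ^ n * g t := by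
        refine mul_le_mul_of_nonneg_left ?_ (by positivity)
        refine intervalIntegral.integral_mono_interval le_rfl hay hyz.le ?_
          (hint z z (by linarith) le_rfl)
        exact (ae_restrict_iff' measurableSet_Ioc).2 <| .of_forall fun t ht =>
          mul_nonneg (pow_nonneg (by linarith [ht.2]) n) (hg0 t (Ioc_subset_Icc_self ht))

section NonnegDerivatives

variable {h : ℝ → ℝ} {s : Set ℝ} {a b y : ℝ}

theorem tendsto_taylor_integral_remainder_zero (hs : IsOpen s) (hsub : Ico a b ⊆ s)
    (hh : ContDiffOn ℝ ∞ h s) (hnn : ∀ n : ℕ, ∀ t ∈ Ico a b, 0 ≤ iteratedDeriv (n + 1) h t)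
    (hy : y ∈ Ico a b) :
    Tendsto (fun n : ℕ => (n ! : ℝ)⁻¹ * ∫ t in a..y, (y - t) ^ n * iteratedDeriv (n + 1) h t)
      atTop (𝓝 0) := by
  set R : ℕ → ℝ → ℝ := fun n x =>
    (n ! : ℝ)⁻¹ * ∫ t in a..x, (x - t) ^ n * iteratedDeriv (n + 1) h t
  obtain ⟨z, hyz, hzb⟩ := exists_between hy.2
  have haz : a < z := hy.1.trans_lt hyz
  have hRz : ∀ n, R n z ≤ h z - h a := fun n => by
    have htaylor := taylor_integral_remainder_iteratedDeriv hs (n := n)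
      (hh.of_le (by exact_mod_cast le_top)) ((uIcc_of_le haz.le).trans_subset
        ((Icc_subset_Ico_right hzb).trans hsub))
    have hsum := Finset.sum_nonneg fun k (_ : k ∈ range n) => mul_nonneg
      (div_nonneg (hnn k a ⟨le_rfl, haz.trans hzb⟩) (by positivity : (0 : ℝ) ≤ (k + 1) !))
      (pow_nonneg (sub_nonneg.2 haz.le) (k + 1))
    linarith
  set r := (y - a) / (z - a)
  have hr0 : 0 ≤ r := div_nonneg (sub_nonneg.2 hy.1) (sub_nonneg.2 haz.le)
  have hr1 : r < 1 := (div_lt_one (sub_pos.2 haz)).2 (by linarith)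
  have hRy_le : ∀ n, R n y ≤ r ^ n * (h z - h a) := fun n => by
    have hcont := (hh.continuousOn_iteratedDeriv_of_isOpen (m := n + 1)
      (by exact_mod_cast le_top) hs).mono ((Icc_subset_Ico_right hzb).trans hsub)
    have hint := integral_sub_pow_mul_le_mul_integral n hcont
      (fun t ht => hnn n t ⟨ht.1, ht.2.trans_lt hzb⟩) hy.1 hyz
    calc R n y ≤ (n ! : ℝ)⁻¹ * (r ^ n * ∫ t in a..z, (z - t) ^ n * iteratedDeriv (n + 1) h t) :=
          mul_le_mul_of_nonneg_left hint (by positivity)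
      _ = r ^ n * R n z := by ring
      _ ≤ r ^ n * (h z - h a) := mul_le_mul_of_nonneg_left (hRz n) (by positivity)
  have hRy_nonneg : ∀ n, 0 ≤ R n y := fun n =>
    mul_nonneg (by positivity) <| intervalIntegral.integral_nonneg hy.1 fun t ht =>
      mul_nonneg (pow_nonneg (by linarith [ht.2]) n) (hnn n t ⟨ht.1, ht.2.trans_lt hy.2⟩)
  refine squeeze_zero hRy_nonneg hRy_le ?_
  simpa using (tendsto_pow_atTop_nhds_zero_of_lt_one hr0 hr1).mul_const (h z - h a)

theorem hasSum_taylorSeries_of_iteratedDeriv_nonneg (hs : IsOpen s) (hsub : Ico a b ⊆ s)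
    (hh : ContDiffOn ℝ ∞ h s) (hnn : ∀ n : ℕ, ∀ t ∈ Ico a b, 0 ≤ iteratedDeriv (n + 1) h t)
    (hy : y ∈ Ico a b) :
    HasSum (fun k => iteratedDeriv (k + 1) h a / ((k + 1) ! : ℝ) * (y - a) ^ (k + 1))
      (h y - h a) := by
  have hterm : ∀ k : ℕ, 0 ≤ iteratedDeriv (k + 1) h a / ((k + 1) ! : ℝ) * (y - a) ^ (k + 1) :=
    fun k => mul_nonneg (div_nonneg (hnn k a ⟨le_rfl, hy.1.trans_lt hy.2⟩) (by positivity))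
      (pow_nonneg (sub_nonneg.2 hy.1) _)
  rw [hasSum_iff_tendsto_nat_of_nonneg hterm]
  have htaylor := fun n : ℕ => taylor_integral_remainder_iteratedDeriv hs (n := n)
    (hh.of_le (by exact_mod_cast le_top)) ((uIcc_of_le hy.1).trans_subset
      ((Icc_subset_Ico_right hy.2).trans hsub))
  simpa [← htaylor] using (tendsto_const_nhds (x := h y - h a)).sub
    (tendsto_taylor_integral_remainder_zero hs hsub hh hnn hy)

end NonnegDerivatives

theorem hasSum_of_tendsto_of_hasSum_mul_pow {a : ℕ → ℝ} {g : ℝ → ℝ} {L : ℝ} (ha : ∀ n, 0 ≤ a n)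
    (hg : ∀ y ∈ Ioo 0 1, HasSum (fun n => a n * y ^ n) (g y)) (hL : Tendsto g (𝓝[<] 1) (𝓝 L)) :
    HasSum a L := by
  have hIoo : ∀ᶠ y in 𝓝[<] (1 : ℝ), y ∈ Ioo 0 1 := Ioo_mem_nhdsLT one_pos
  have hpartial : ∀ N, ∑ n ∈ range N, a n ≤ L := fun N => by
    have hpoly : Tendsto (fun y : ℝ => ∑ n ∈ range N, a n * y ^ n) (𝓝[<] 1)
        (𝓝 (∑ n ∈ range N, a n)) := by
      have hcont : Continuous fun y : ℝ => ∑ n ∈ range N, a n * y ^ n :=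
        continuous_finsetSum _ fun n _ => continuous_const.mul (continuous_pow n)
      simpa using (hcont.tendsto 1).mono_left nhdsWithin_le_nhds
    exact le_of_tendsto_of_tendsto hpoly hL <| hIoo.mono fun y hy =>
      sum_le_hasSum _ (fun n _ => mul_nonneg (ha n) (pow_nonneg hy.1.le n)) (hg y hy)
  have hsum : Summable a := summable_of_sum_range_le ha hpartial
  have hle : L ≤ ∑' n, a n := le_of_tendsto hL <| hIoo.mono fun y hy =>
    hasSum_le (fun n => mul_le_of_le_one_right (ha n) (pow_le_one₀ hy.1.le hy.2.le))
      (hg y hy) hsum.hasSum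
  simpa [le_antisymm (Real.tsum_le_of_sum_range_le ha hpartial) hle] using hsum.hasSum

theorem tendsto_const_sub_nhdsLT (a : ℝ) : Tendsto (fun y => a - y) (𝓝[<] a) (𝓝[>] 0) :=
  tendsto_nhdsWithin_iff.2 ⟨tendsto_nhdsWithin_of_tendsto_nhds (by
    simpa using (tendsto_const_nhds (x := a)).sub (tendsto_id (x := 𝓝 a))),
    eventually_nhdsWithin_of_forall fun _ (hy : _ < a) => sub_pos.2 hy⟩

theorem iteratedDeriv_succ_neg_comp_const_sub (f : ℝ → ℝ) (c y : ℝ) (k : ℕ) :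
    iteratedDeriv (k + 1) (fun y => -f (c - y)) y = (-1) ^ k * iteratedDeriv (k + 1) f (c - y) := by
  simp [iteratedDeriv_comp_const_sub, pow_succ]

namespace IsBernstein

variable {ψ : ℝ → ℝ}

theorem neg_one_pow_mul_iteratedDeriv_succ_nonneg (hψ : IsBernstein ψ) (k : ℕ) {x : ℝ}
    (hx : 0 < x) : 0 ≤ (-1) ^ k * iteratedDeriv (k + 1) ψ x := by
  simpa using hψ.2.2 (k + 1) k.succ_pos x hx

theorem hasSum_taylorSeries (hψ : IsBernstein ψ) {c y : ℝ} (hy : y ∈ Ico 0 c) :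
    HasSum (fun j => (-1) ^ j * iteratedDeriv (j + 1) ψ c / ((j + 1) ! : ℝ) * y ^ (j + 1))
      (ψ c - ψ (c - y)) := by
  have hsmooth : ContDiffOn ℝ ∞ (fun y => -ψ (c - y)) (Iio c) :=
    (hψ.1.comp (contDiff_const.sub contDiff_id).contDiffOn fun t ht => by simpa using ht).neg
  have h := hasSum_taylorSeries_of_iteratedDeriv_nonneg isOpen_Iio Ico_subset_Iio_self hsmooth
    (fun n t ht => iteratedDeriv_succ_neg_comp_const_sub ψ c t n ▸
      hψ.neg_one_pow_mul_iteratedDeriv_succ_nonneg n (sub_pos.2 ht.2)) hy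
  simp only [iteratedDeriv_succ_neg_comp_const_sub, sub_zero, sub_neg_eq_add] at h
  rwa [neg_add_eq_sub] at h

end IsBernstein

/-- the semi-fractional Sibuya probabilities
`p_j = (−1)^(j−1) ψ^(j)(1)/(j! ψ(1))`, `j ≥ 1`, are non-negative and sum to `1`. -/
theorem stmt9 (ψ : ℝ → ℝ) (hψ : IsBernstein ψ)
    (h0 : Filter.Tendsto ψ (nhdsWithin 0 (Set.Ioi 0)) (nhds 0)) (h1 : 0 < ψ 1) :
    (∀ j : ℕ,
      0 ≤ (-1 : ℝ) ^ j * iteratedDeriv (j + 1) ψ 1 / ((j + 1).factorial * ψ 1)) ∧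
    HasSum
      (fun j : ℕ => (-1 : ℝ) ^ j * iteratedDeriv (j + 1) ψ 1 / ((j + 1).factorial * ψ 1))
      1 := by
  set q : ℕ → ℝ := fun j => (-1) ^ j * iteratedDeriv (j + 1) ψ 1 / ((j + 1) ! : ℝ) with hq
  have hq_nonneg : ∀ j, 0 ≤ q j := fun j =>
    div_nonneg (hψ.neg_one_pow_mul_iteratedDeriv_succ_nonneg j one_pos) (by positivity)
  have hseries : ∀ y ∈ Ioo (0 : ℝ) 1,
      HasSum (fun j => q j * y ^ j) ((ψ 1 - ψ (1 - y)) / y) := fun y hy => by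
    have h := (hψ.hasSum_taylorSeries ⟨hy.1.le, hy.2⟩).div_const y
    simp only [pow_succ, ← mul_assoc, mul_div_cancel_right₀ _ hy.1.ne'] at h
    exact h
  have hlim : Tendsto (fun y => (ψ 1 - ψ (1 - y)) / y) (𝓝[<] 1) (𝓝 (ψ 1)) := by
    have hnum : Tendsto (fun y => ψ 1 - ψ (1 - y)) (𝓝[<] 1) (𝓝 (ψ 1)) := by
      simpa using tendsto_const_nhds.sub (h0.comp (tendsto_const_sub_nhdsLT 1))
    have h := hnum.div (tendsto_nhdsWithin_of_tendsto_nhds tendsto_id) one_ne_zero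
    rwa [div_one] at h
  have hsum := hasSum_of_tendsto_of_hasSum_mul_pow hq_nonneg hseries hlim
  refine ⟨fun j => ?_, ?_⟩
  · rw [← div_div]
    exact div_nonneg (hq_nonneg j) h1.le
  · simpa [hq, div_div, div_self h1.ne'] using hsum.div_const (ψ 1)
end
end

section
/- Let ψ be a Bernstein function with lim_{x↓0} ψ(x) = 0 and ψ(1) > 0, and let p_j := (−1)^{j−1} ψ^{(j)}(1) / (j! · ψ(1)) for j ∈ ℕ. Then the probability generating function of the associated semi-fractional Sibuya distribution satisfies G(z) := ∑_{j=1}^∞ p_j z^j = 1 − ψ(1 − z)/ψ(1) for all z ∈ [0, 1), where ψ(0) is interpreted as the limit lim_{x↓0} ψ(x) = 0. -/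
open MeasureTheory Set Filter Real

noncomputable section

/-! For `t ∈ [0, 1)` the function `g t = ψ 1 - ψ (1 - t)` has nonnegative derivatives of all
orders on `[0, 1)`: the reflection `t ↦ 1 - t` exactly cancels the alternating signs of a
Bernstein function. So the claim is Bernstein's theorem that an absolutely monotone function `f`
on `[a, b)` is the sum of its Taylor series at `a`. Since all Taylor terms and Lagrange remainders
of `f` are nonnegative, a single term `f⁽ⁿ⁾(u) (v - u)ⁿ / n!` is at most `f v`. Using this at the
intermediate point `ξ` of the Cauchy form of the remainder, for `a < x < y < b`, bounds the
remainder by `(n + 1) f(y) (x - a) / (y - x) · ((x - a) / (y - a))ⁿ`, which tends to `0`. -/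

open Finset Topology
open scoped ContDiff Nat

variable {f : ℝ → ℝ} {a b u v : ℝ}

theorem ContDiffOn.iteratedDerivWithin_Icc_eq_of_subset_Ico (hf : ContDiffOn ℝ ∞ f (Ico a b))
    (hau : a ≤ u) (huv : u < v) (hvb : v < b) (n : ℕ) {t : ℝ} (ht : t ∈ Icc u v) :
    iteratedDerivWithin n f (Icc u v) t = iteratedDerivWithin n f (Ico a b) t := by
  simp only [iteratedDerivWithin_eq_iteratedFDerivWithin]
  rw [iteratedFDerivWithin_subset (Icc_subset_Ico hau hvb) (uniqueDiffOn_Icc huv)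
    (uniqueDiffOn_Ico a b) (hf.of_le (mod_cast le_top)) ht]

theorem ContDiffOn.taylorWithinEval_Icc_eq_sum (hf : ContDiffOn ℝ ∞ f (Ico a b))
    (hau : a ≤ u) (huv : u < v) (hvb : v < b) (n : ℕ) :
    taylorWithinEval f n (Icc u v) u v =
      ∑ k ∈ range (n + 1), iteratedDerivWithin k f (Ico a b) u / k ! * (v - u) ^ k := by
  rw [taylor_within_apply]
  refine sum_congr rfl fun k _ => ?_
  rw [hf.iteratedDerivWithin_Icc_eq_of_subset_Ico hau huv hvb k (left_mem_Icc.2 huv.le),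
    smul_eq_mul]
  ring

theorem ContDiffOn.taylor_mean_remainder_lagrange_Ico (hf : ContDiffOn ℝ ∞ f (Ico a b))
    (hau : a ≤ u) (huv : u < v) (hvb : v < b) (n : ℕ) :
    ∃ ξ ∈ Ioo u v,
      f v - ∑ k ∈ range (n + 1), iteratedDerivWithin k f (Ico a b) u / k ! * (v - u) ^ k =
        iteratedDerivWithin (n + 1) f (Ico a b) ξ * (v - u) ^ (n + 1) / (n + 1)! := by
  have hcd : ContDiffOn ℝ (n + 1) f (Icc u v) :=
    (hf.mono (Icc_subset_Ico hau hvb)).of_le (mod_cast le_top)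
  have hd : DifferentiableOn ℝ (iteratedDerivWithin n f (Icc u v)) (Ioo u v) :=
    (hcd.differentiableOn_iteratedDerivWithin (mod_cast n.lt_succ_self)
      (uniqueDiffOn_Icc huv)).mono Ioo_subset_Icc_self
  have H := taylor_mean_remainder_lagrange (f := f) (n := n) huv.ne
  rw [uIcc_of_le huv.le, uIoo_of_le huv.le] at H
  obtain ⟨ξ, hξ, h⟩ := H hcd.of_succ hd
  refine ⟨ξ, hξ, ?_⟩
  rwa [← hf.taylorWithinEval_Icc_eq_sum hau huv hvb,
    ← hf.iteratedDerivWithin_Icc_eq_of_subset_Ico hau huv hvb _ (Ioo_subset_Icc_self hξ)]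

theorem ContDiffOn.taylor_mean_remainder_cauchy_Ico (hf : ContDiffOn ℝ ∞ f (Ico a b))
    (hau : a ≤ u) (huv : u < v) (hvb : v < b) (n : ℕ) :
    ∃ ξ ∈ Ioo u v,
      f v - ∑ k ∈ range (n + 1), iteratedDerivWithin k f (Ico a b) u / k ! * (v - u) ^ k =
        iteratedDerivWithin (n + 1) f (Ico a b) ξ * (v - ξ) ^ n / n ! * (v - u) := by
  have hcd : ContDiffOn ℝ (n + 1) f (Icc u v) :=
    (hf.mono (Icc_subset_Ico hau hvb)).of_le (mod_cast le_top)
  have hd : DifferentiableOn ℝ (iteratedDerivWithin n f (Icc u v)) (Ioo u v) :=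
    (hcd.differentiableOn_iteratedDerivWithin (mod_cast n.lt_succ_self)
      (uniqueDiffOn_Icc huv)).mono Ioo_subset_Icc_self
  have H := taylor_mean_remainder_cauchy (f := f) (n := n) huv.ne
  rw [uIcc_of_le huv.le, uIoo_of_le huv.le] at H
  obtain ⟨ξ, hξ, h⟩ := H hcd.of_succ hd
  refine ⟨ξ, hξ, ?_⟩
  rwa [← hf.taylorWithinEval_Icc_eq_sum hau huv hvb,
    ← hf.iteratedDerivWithin_Icc_eq_of_subset_Ico hau huv hvb _ (Ioo_subset_Icc_self hξ)]

namespace AbsolutelyMonotoneOn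

theorem taylor_term_nonneg (hf : AbsolutelyMonotoneOn f (Ico a b)) (hu : u ∈ Ico a b)
    (huv : u ≤ v) (k : ℕ) :
    0 ≤ iteratedDerivWithin k f (Ico a b) u / k ! * (v - u) ^ k := by
  have := hf.iteratedDerivWithin_nonneg (uniqueDiffOn_Ico a b) k hu
  have : 0 ≤ v - u := sub_nonneg.2 huv
  positivity

theorem sum_taylor_le (hf : AbsolutelyMonotoneOn f (Ico a b)) (hau : a ≤ u) (huv : u < v)
    (hvb : v < b) (n : ℕ) :
    ∑ k ∈ range (n + 1), iteratedDerivWithin k f (Ico a b) u / k ! * (v - u) ^ k ≤ f v := by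
  obtain ⟨ξ, hξ, h⟩ := hf.contDiffOn.taylor_mean_remainder_lagrange_Ico hau huv hvb n
  have hD := hf.iteratedDerivWithin_nonneg (uniqueDiffOn_Ico a b) (n + 1)
    ⟨hau.trans hξ.1.le, hξ.2.trans hvb⟩
  have huv' : 0 ≤ v - u := by linarith
  have hrem : 0 ≤ iteratedDerivWithin (n + 1) f (Ico a b) ξ * (v - u) ^ (n + 1) / (n + 1)! := by
    positivity
  linarith

theorem iteratedDerivWithin_mul_pow_le (hf : AbsolutelyMonotoneOn f (Ico a b)) (hau : a ≤ u)
    (huv : u < v) (hvb : v < b) (n : ℕ) :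
    iteratedDerivWithin n f (Ico a b) u * (v - u) ^ n ≤ n ! * f v := by
  have hterm := (single_le_sum (fun k _ => hf.taylor_term_nonneg ⟨hau, huv.trans hvb⟩ huv.le k)
    (self_mem_range_succ n)).trans (hf.sum_taylor_le hau huv hvb n)
  rw [div_mul_eq_mul_div, div_le_iff₀ (by positivity)] at hterm
  linarith

theorem sub_sum_taylor_le {x y : ℝ} (hf : AbsolutelyMonotoneOn f (Ico a b)) (hax : a < x)
    (hxy : x < y) (hyb : y < b) (n : ℕ) :
    f x - ∑ k ∈ range (n + 1), iteratedDerivWithin k f (Ico a b) a / k ! * (x - a) ^ k ≤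
      (n + 1) * f y * ((x - a) / (y - x)) * ((x - a) / (y - a)) ^ n := by
  obtain ⟨ξ, hξ, h⟩ :=
    hf.contDiffOn.taylor_mean_remainder_cauchy_Ico le_rfl hax (hxy.trans hyb) n
  set D := iteratedDerivWithin (n + 1) f (Ico a b) ξ
  have hD : 0 ≤ D := hf.iteratedDerivWithin_nonneg (uniqueDiffOn_Ico a b) _
    ⟨hξ.1.le, hξ.2.trans (hxy.trans hyb)⟩
  have hfy : 0 ≤ f y := by
    simpa using hf.iteratedDerivWithin_nonneg (uniqueDiffOn_Ico a b) 0 ⟨(hax.trans hxy).le, hyb⟩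
  have hDy : D * (y - ξ) ^ (n + 1) ≤ (n + 1)! * f y :=
    hf.iteratedDerivWithin_mul_pow_le hξ.1.le (hξ.2.trans hxy) hyb (n + 1)
  have hξx : 0 ≤ x - ξ := by linarith [hξ.2]
  have hξy : 0 < y - ξ := by linarith [hξ.2]
  have hratio : (x - ξ) / (y - ξ) ≤ (x - a) / (y - a) := by
    rw [div_le_div_iff₀ hξy (by linarith)]
    nlinarith [hξ.1]
  have hfirst : (x - a) / (y - ξ) ≤ (x - a) / (y - x) :=
    div_le_div_of_nonneg_left (by linarith) (by linarith) (by linarith [hξ.2])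
  rw [h]
  calc D * (x - ξ) ^ n / n ! * (x - a)
      = D * (y - ξ) ^ (n + 1) / n ! * ((x - a) / (y - ξ)) * ((x - ξ) / (y - ξ)) ^ n := by
        rw [div_pow]; field_simp; ring
    _ ≤ (n + 1)! * f y / n ! * ((x - a) / (y - x)) * ((x - a) / (y - a)) ^ n := by
        gcongr
    _ = (n + 1) * f y * ((x - a) / (y - x)) * ((x - a) / (y - a)) ^ n := by
        rw [Nat.factorial_succ]; push_cast; field_simp

theorem hasSum_taylorSeries {x : ℝ} (hf : AbsolutelyMonotoneOn f (Ico a b)) (hx : x ∈ Ico a b) :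
    HasSum (fun n => iteratedDerivWithin n f (Ico a b) a / n ! * (x - a) ^ n) (f x) := by
  rcases hx.1.eq_or_lt with rfl | hax
  · simpa using hasSum_single
      (f := fun n => iteratedDerivWithin n f (Ico a b) a / n ! * (a - a) ^ n) 0
      fun n hn => by simp [hn]
  set y := (x + b) / 2 with hy
  have hxy : x < y := by linarith [hx.2]
  have hyb : y < b := by linarith [hx.2]
  set r := (x - a) / (y - a)
  have hr0 : 0 ≤ r := div_nonneg (by linarith) (by linarith)
  have hr1 : r < 1 := (div_lt_one (by linarith)).2 (by linarith)
  have hbound :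
      Tendsto (fun n : ℕ => (n + 1) * f y * ((x - a) / (y - x)) * r ^ n) atTop (𝓝 0) := by
    have := ((tendsto_self_mul_const_pow_of_lt_one hr0 hr1).add
      (tendsto_pow_atTop_nhds_zero_of_lt_one hr0 hr1)).const_mul (f y * ((x - a) / (y - x)))
    rw [add_zero, mul_zero] at this
    exact this.congr fun n => by ring
  have hrem : Tendsto (fun n => f x -
      ∑ k ∈ range (n + 1), iteratedDerivWithin k f (Ico a b) a / k ! * (x - a) ^ k) atTop (𝓝 0) :=
    squeeze_zero (fun n => sub_nonneg.2 (hf.sum_taylor_le le_rfl hax hx.2 n))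
      (hf.sub_sum_taylor_le hax hxy hyb) hbound
  rw [hasSum_iff_tendsto_nat_of_nonneg (hf.taylor_term_nonneg ⟨le_rfl, hax.trans hx.2⟩ hax.le),
    ← tendsto_add_atTop_iff_nat 1]
  simpa using (tendsto_const_nhds (x := f x)).sub hrem

end AbsolutelyMonotoneOn

namespace IsBernstein

variable {ψ : ℝ → ℝ}

theorem monotoneOn_s10 (hψ : IsBernstein ψ) : MonotoneOn ψ (Ioi 0) := by
  refine monotoneOn_of_deriv_nonneg (convex_Ioi 0) hψ.1.continuousOn
    ((hψ.1.differentiableOn (by simp)).mono interior_subset) fun x hx => ?_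
  rw [interior_Ioi] at hx
  simpa using hψ.2.2 1 one_pos x hx

theorem contDiffOn_sub_comp_const_sub (hψ : IsBernstein ψ) (c : ℝ) :
    ContDiffOn ℝ ∞ (fun s => ψ c - ψ (c - s)) (Iio c) :=
  contDiffOn_const.sub <|
    hψ.1.comp (contDiffOn_const.sub contDiffOn_id) fun _ hs => mem_Ioi.2 (sub_pos.2 hs)

theorem iteratedDerivWithin_succ_sub_comp_const_sub (hψ : IsBernstein ψ) {c t : ℝ}
    (ht : t ∈ Ico 0 c) (k : ℕ) :
    iteratedDerivWithin (k + 1) (fun s => ψ c - ψ (c - s)) (Ico 0 c) t =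
      (-1) ^ k * iteratedDeriv (k + 1) ψ (c - t) := by
  have hsmooth := (hψ.contDiffOn_sub_comp_const_sub c).contDiffAt (Iio_mem_nhds ht.2)
  rw [iteratedDerivWithin_eq_iteratedDeriv (uniqueDiffOn_Ico 0 c)
      (hsmooth.of_le (mod_cast le_top)) ht, iteratedDeriv_const_sub k.succ_pos, iteratedDeriv_neg,
    iteratedDeriv_comp_const_sub]
  simp only [smul_eq_mul, pow_succ]
  ring

theorem absolutelyMonotoneOn_sub_comp_const_sub (hψ : IsBernstein ψ) (c : ℝ) :
    AbsolutelyMonotoneOn (fun s => ψ c - ψ (c - s)) (Ico 0 c) := by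
  rw [AbsolutelyMonotoneOn.iff_iteratedDerivWithin_nonneg (uniqueDiffOn_Ico 0 c)]
  refine ⟨(hψ.contDiffOn_sub_comp_const_sub c).mono Ico_subset_Iio_self, fun n t ht => ?_⟩
  have hct : 0 < c - t := sub_pos.2 ht.2
  cases n with
  | zero =>
    simpa using hψ.monotoneOn_s10 hct (hct.trans_le (sub_le_self c ht.1)) (sub_le_self c ht.1)
  | succ k =>
    rw [hψ.iteratedDerivWithin_succ_sub_comp_const_sub ht]
    simpa using hψ.2.2 (k + 1) k.succ_pos (c - t) hct

end IsBernstein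

theorem stmt10_general (ψ : ℝ → ℝ) (hψ : IsBernstein ψ) (h1 : 0 < ψ 1) :
    ∀ z ∈ Set.Ico (0:ℝ) 1,
      HasSum
        (fun j : ℕ =>
          ((-1 : ℝ) ^ j * iteratedDeriv (j + 1) ψ 1 / ((j + 1).factorial * ψ 1))
            * z ^ (j + 1))
        (1 - ψ (1 - z) / ψ 1) := by
  intro z hz
  have hsum := (hψ.absolutelyMonotoneOn_sub_comp_const_sub 1).hasSum_taylorSeries hz
  rw [← hasSum_nat_add_iff' 1] at hsum
  have hquot := hsum.div_const (ψ 1)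
  simp only [range_one, sum_singleton, iteratedDerivWithin_zero, sub_zero, sub_self,
    zero_div, zero_mul, sub_div, div_self h1.ne'] at hquot
  refine hquot.congr_fun fun j => ?_
  rw [hψ.iteratedDerivWithin_succ_sub_comp_const_sub ⟨le_rfl, one_pos⟩, sub_zero]
  field_simp

/-- the probability generating function of the semi-fractional Sibuya
distribution is `G(z) = 1 − ψ(1−z)/ψ(1)` for `z ∈ [0,1)`. -/
theorem stmt10 (ψ : ℝ → ℝ) (hψ : IsBernstein ψ)
    (h0 : Filter.Tendsto ψ (nhdsWithin 0 (Set.Ioi 0)) (nhds 0)) (h1 : 0 < ψ 1) :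
    ∀ z ∈ Set.Ico (0:ℝ) 1,
      HasSum
        (fun j : ℕ =>
          ((-1 : ℝ) ^ j * iteratedDeriv (j + 1) ψ 1 / ((j + 1).factorial * ψ 1))
            * z ^ (j + 1))
        (1 - ψ (1 - z) / ψ 1) :=
  stmt10_general ψ hψ h1
end
end

section
/- Let f : (0,∞) → (0,∞) be a bijective C^∞ function such that its derivative f′ is a Bernstein function and f^{(n)}(x) ≠ 0 for all n ∈ ℕ and x > 0. Then the inverse function f^{−1} : (0,∞) → (0,∞) is a Bernstein function, and moreover (f^{−1})^{(n)}(x) ≠ 0 for all n ∈ ℕ and x > 0. -/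
open MeasureTheory Set Filter Real

noncomputable section

/-!
Since `g' = 1 / (f' ∘ g)`, the point is that strict complete monotonicity on `(0,∞)`
(`(-1)^k h^{(k)} > 0` for all `k`) holds for `x ↦ 1/x` and for `f''`, is preserved by products
(Leibniz rule) and by composition `a ∘ φ` with `φ > 0`, `φ'` completely monotone (since
`-(a ∘ φ)' = ((-a') ∘ φ) · φ'`). Truncating at order `n`: if `g'` is strictly completely monotone
up to order `n`, then so is `(f' ∘ g)' = (f'' ∘ g) · g'`, hence `g' = (1/·) ∘ (f' ∘ g)` is up to
order `n + 1`. By induction `g'` is strictly completely monotone, which is the claim for `g`.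
-/

open scoped ContDiff Topology

theorem ContDiffAt.of_leftInvOn {𝕂 E F : Type*} [RCLike 𝕂] [NormedAddCommGroup E]
    [NormedSpace 𝕂 E] [CompleteSpace E] [NormedAddCommGroup F] [NormedSpace 𝕂 F]
    {f : E → F} {g : F → E} {f' : E ≃L[𝕂] F} {a : E} {s : Set E} {n : WithTop ℕ∞}
    (hf : ContDiffAt 𝕂 n f a) (hf' : HasFDerivAt f (f' : E →L[𝕂] F) a) (hn : n ≠ 0)
    (hs : s ∈ 𝓝 a) (hg : LeftInvOn g f s) : ContDiffAt 𝕂 n g (f a) := by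
  set φ := hf.localInverse hf' hn
  have hφ : ContDiffAt 𝕂 n φ (f a) := hf.to_localInverse hf' hn
  have hright : ∀ᶠ z in 𝓝 (f a), f (φ z) = z :=
    (hf.hasStrictFDerivAt' hf' hn).eventually_right_inverse
  have hmem : ∀ᶠ z in 𝓝 (f a), φ z ∈ s :=
    hφ.continuousAt.preimage_mem_nhds
      (by rwa [show φ (f a) = a from hf.localInverse_apply_image ..])
  refine hφ.congr_of_eventuallyEq ?_
  filter_upwards [hright, hmem] with z hfz hz
  calc g z = g (f (φ z)) := by rw [hfz]
    _ = φ z := hg hz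

/-- Strict complete monotonicity on `(0,∞)`, truncated to derivatives of order `< n`. -/
def StrictlyCM (n : ℕ) (h : ℝ → ℝ) : Prop :=
  ContDiffOn ℝ ∞ h (Ioi 0) ∧ ∀ k < n, ∀ x > (0:ℝ), 0 < (-1) ^ k * iteratedDeriv k h x

namespace StrictlyCM

variable {m n : ℕ} {a b φ : ℝ → ℝ}

theorem mono (ha : StrictlyCM n a) (hmn : m ≤ n) : StrictlyCM m a :=
  ⟨ha.1, fun k hk => ha.2 k (hk.trans_le hmn)⟩

theorem congr (ha : StrictlyCM n a) (hab : EqOn a b (Ioi 0)) : StrictlyCM n b :=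
  ⟨ha.1.congr hab.symm, fun k hk x hx => by
    rw [← hab.iteratedDeriv_of_isOpen isOpen_Ioi k hx]
    exact ha.2 k hk x hx⟩

theorem contDiffAt (ha : StrictlyCM n a) {x : ℝ} (hx : 0 < x) {k : WithTop ℕ∞} (hk : k ≤ ∞) :
    ContDiffAt ℝ k a x :=
  (ha.1.contDiffAt (Ioi_mem_nhds hx)).of_le hk

theorem mul (ha : StrictlyCM n a) (hb : StrictlyCM n b) : StrictlyCM n (a * b) := by
  refine ⟨ha.1.mul hb.1, fun k hk x hx => ?_⟩
  rw [iteratedDeriv_mul (ha.contDiffAt hx (mod_cast le_top))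
    (hb.contDiffAt hx (mod_cast le_top)), Finset.mul_sum]
  refine Finset.sum_pos (fun i hi => ?_) Finset.nonempty_range_add_one
  have hik : i ≤ k := Nat.lt_succ_iff.mp (Finset.mem_range.mp hi)
  have hsplit : (-1 : ℝ) ^ k = (-1) ^ i * (-1) ^ (k - i) := by
    rw [← pow_add, Nat.add_sub_cancel' hik]
  calc 0 < (k.choose i : ℝ) * ((-1) ^ i * iteratedDeriv i a x)
        * ((-1) ^ (k - i) * iteratedDeriv (k - i) b x) :=
        mul_pos (mul_pos (mod_cast Nat.choose_pos hik) (ha.2 i (by omega) x hx))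
          (hb.2 (k - i) (by omega) x hx)
    _ = _ := by rw [hsplit]; ring

theorem neg_deriv (ha : StrictlyCM (n + 1) a) : StrictlyCM n (-deriv a) := by
  refine ⟨(ha.1.deriv_of_isOpen isOpen_Ioi (by simp)).neg, fun k hk x hx => ?_⟩
  rw [iteratedDeriv_neg, ← iteratedDeriv_succ']
  simpa [pow_succ] using ha.2 (k + 1) (by omega) x hx

theorem of_neg_deriv (ha : ContDiffOn ℝ ∞ a (Ioi 0)) (hpos : ∀ x > 0, 0 < a x)
    (ha' : StrictlyCM n (-deriv a)) : StrictlyCM (n + 1) a := by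
  refine ⟨ha, fun k hk x hx => ?_⟩
  rcases k with _ | k
  · simpa using hpos x hx
  · have := ha'.2 k (by omega) x hx
    rw [iteratedDeriv_neg, ← iteratedDeriv_succ'] at this
    simpa [pow_succ] using this

theorem of_neg_deriv_comp (ha : StrictlyCM 1 a) (hφ : ContDiffOn ℝ ∞ φ (Ioi 0))
    (hφpos : MapsTo φ (Ioi 0) (Ioi 0)) (h : StrictlyCM n ((-deriv a) ∘ φ * deriv φ)) :
    StrictlyCM (n + 1) (a ∘ φ) := by
  refine of_neg_deriv (ha.1.comp hφ hφpos)
    (fun x hx => by simpa using ha.2 0 one_pos (φ x) (hφpos hx)) (h.congr fun x hx => ?_)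
  have hda := (ha.contDiffAt (hφpos hx) le_rfl).differentiableAt (by simp)
  have hdφ := (hφ.contDiffAt (Ioi_mem_nhds hx)).differentiableAt (by simp)
  simp only [Pi.mul_apply, Pi.neg_apply, Function.comp_apply, deriv_comp x hda hdφ]
  ring

theorem comp (ha : StrictlyCM (n + 1) a) (hφ : ContDiffOn ℝ ∞ φ (Ioi 0))
    (hφpos : MapsTo φ (Ioi 0) (Ioi 0)) (hφ' : StrictlyCM n (deriv φ)) :
    StrictlyCM (n + 1) (a ∘ φ) := by
  induction n generalizing a with
  | zero =>
    exact of_neg_deriv_comp ha hφ hφpos ⟨(ha.neg_deriv.1.comp hφ hφpos).mul hφ'.1, by simp⟩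
  | succ n ih =>
    exact of_neg_deriv_comp (ha.mono (by omega)) hφ hφpos
      ((ih ha.neg_deriv (hφ'.mono n.le_succ)).mul hφ')

theorem inv (n : ℕ) : StrictlyCM n Inv.inv := by
  refine ⟨(contDiffOn_inv ℝ).mono fun x hx => ne_of_gt hx, fun k _ x hx => ?_⟩
  rw [iteratedDeriv_eq_iterate, iter_deriv_inv, ← mul_assoc, ← mul_assoc, ← pow_add, ← two_mul,
    pow_mul]
  norm_num
  positivity

end StrictlyCM

theorem IsBernstein.strictlyCM_deriv {ψ : ℝ → ℝ} (hψ : IsBernstein ψ)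
    (hne : ∀ n > 0, ∀ x > (0:ℝ), iteratedDeriv n ψ x ≠ 0) (n : ℕ) : StrictlyCM n (deriv ψ) := by
  refine ⟨hψ.1.deriv_of_isOpen isOpen_Ioi (by simp), fun k _ x hx => ?_⟩
  have hsign := hψ.2.2 (k + 1) k.succ_pos x hx
  rw [Nat.add_sub_cancel, iteratedDeriv_succ'] at hsign
  have hne' := hne (k + 1) k.succ_pos x hx
  rw [iteratedDeriv_succ'] at hne'
  exact hsign.lt_of_ne (mul_ne_zero (by simp) hne').symm

theorem isBernstein_of_strictlyCM_deriv {ψ : ℝ → ℝ} (hψ : ContDiffOn ℝ ∞ ψ (Ioi 0))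
    (hnonneg : ∀ x > 0, 0 ≤ ψ x) (h : ∀ n, StrictlyCM n (deriv ψ)) :
    IsBernstein ψ ∧ ∀ n : ℕ, 0 < n → ∀ x > (0:ℝ), iteratedDeriv n ψ x ≠ 0 := by
  have hsign : ∀ n : ℕ, 0 < n → ∀ x > (0:ℝ), 0 < (-1) ^ (n - 1) * iteratedDeriv n ψ x := by
    intro n hn x hx
    obtain ⟨k, rfl⟩ := Nat.exists_eq_add_of_lt hn
    simpa [iteratedDeriv_succ'] using (h (k + 1)).2 k k.lt_succ_self x hx
  exact ⟨⟨hψ, hnonneg, fun n hn x hx => (hsign n hn x hx).le⟩,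
    fun n hn x hx h0 => by simpa [h0] using hsign n hn x hx⟩

theorem strictlyCM_deriv_of_eqOn_inv_comp {b g : ℝ → ℝ} (hb : ContDiffOn ℝ ∞ b (Ioi 0))
    (hbpos : MapsTo b (Ioi 0) (Ioi 0)) (hb' : ∀ n, StrictlyCM n (deriv b))
    (hg : ContDiffOn ℝ ∞ g (Ioi 0)) (hgpos : MapsTo g (Ioi 0) (Ioi 0))
    (hg' : EqOn (deriv g) (fun y => (b (g y))⁻¹) (Ioi 0)) (n : ℕ) :
    StrictlyCM n (deriv g) := by
  induction n with
  | zero => exact ⟨hg.deriv_of_isOpen isOpen_Ioi (by simp), by simp⟩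
  | succ n ih =>
    have hchain : EqOn (deriv b ∘ g * deriv g) (deriv (b ∘ g)) (Ioi 0) := fun x hx =>
      (deriv_comp x ((hb.contDiffAt (Ioi_mem_nhds (hgpos hx))).differentiableAt (by simp))
        ((hg.contDiffAt (Ioi_mem_nhds hx)).differentiableAt (by simp))).symm
    have hbg : StrictlyCM n (deriv (b ∘ g)) :=
      ((((hb' (n + 1)).comp hg hgpos ih).mono n.le_succ).mul ih).congr hchain
    exact ((StrictlyCM.inv (n + 1)).comp (hb.comp hg hgpos) (hbpos.comp hgpos) hbg).congr
      fun x hx => (hg' hx).symm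

/-- if `f : (0,∞) → (0,∞)` is a bijective `C^∞` function whose derivative
is a Bernstein function and whose derivatives never vanish, then the inverse `f⁻¹` is a
Bernstein function with non-vanishing derivatives. -/
theorem stmt12 (f g : ℝ → ℝ)
    (hbij : Set.BijOn f (Set.Ioi 0) (Set.Ioi 0))
    (hsmooth : ContDiffOn ℝ (⊤ : ℕ∞) f (Set.Ioi 0))
    (hf' : IsBernstein (deriv f))
    (hne : ∀ n : ℕ, 0 < n → ∀ x > (0:ℝ), iteratedDeriv n f x ≠ 0)
    (hinv : Set.InvOn g f (Set.Ioi 0) (Set.Ioi 0)) :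
    IsBernstein g ∧ ∀ n : ℕ, 0 < n → ∀ x > (0:ℝ), iteratedDeriv n g x ≠ 0 := by
  have hgpos : MapsTo g (Ioi 0) (Ioi 0) := fun y hy => by
    obtain ⟨x, hx, rfl⟩ := hbij.surjOn hy
    rwa [hinv.1 hx]
  have hf'pos : MapsTo (deriv f) (Ioi 0) (Ioi 0) := fun x hx =>
    (hf'.2.1 x hx).lt_of_ne (by simpa using (hne 1 one_pos x hx).symm)
  have hfd : ∀ x > (0:ℝ), HasDerivAt f (deriv f x) x := fun x hx =>
    ((hsmooth.contDiffAt (Ioi_mem_nhds hx)).differentiableAt (by simp)).hasDerivAt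
  have hg : ContDiffOn ℝ ∞ g (Ioi 0) := fun y hy => by
    obtain ⟨x, hx, rfl⟩ := hbij.surjOn hy
    exact ((hsmooth.contDiffAt (Ioi_mem_nhds hx)).of_leftInvOn
      ((hfd x hx).hasFDerivAt_equiv (hf'pos hx).ne') (by simp) (Ioi_mem_nhds hx)
      hinv.1).contDiffWithinAt
  have hg' : EqOn (deriv g) (fun y => (deriv f (g y))⁻¹) (Ioi 0) := fun y hy =>
    (HasDerivAt.of_local_left_inverse (hg.continuousOn.continuousAt (Ioi_mem_nhds hy))
      (hfd _ (hgpos hy)) (hf'pos (hgpos hy)).ne'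
      (eventually_gt_nhds hy |>.mono fun z hz => hinv.2 hz)).deriv
  have hf'' : ∀ n > 0, ∀ x > (0:ℝ), iteratedDeriv n (deriv f) x ≠ 0 := fun n _ x hx => by
    simpa [← iteratedDeriv_succ'] using hne (n + 1) n.succ_pos x hx
  exact isBernstein_of_strictlyCM_deriv hg (fun y hy => (hgpos hy).le)
    (strictlyCM_deriv_of_eqOn_inv_comp (hsmooth.deriv_of_isOpen isOpen_Ioi (by simp)) hf'pos
      (hf'.strictlyCM_deriv hf'') hg hgpos hg')
end
end

section
/- Let α ∈ (1,2), d > 1, let τ be a continuously differentiable admissable function with respect to 1/α and d, let μ be the Borel measure on (0,∞) with μ((t,∞)) = t^{−1/α} τ(log t) for all t > 0, and define ξ(s) = ∫₀^∞ (1 − e^{−st}) dμ(t) for s > 0. Then for every s > 0, ξ′(s) = ∫₀^∞ e^{−st} t dμ(t) = ∫₀^∞ e^{−st} t^{−1/α} ( (1/α) τ(log t) − τ′(log t) ) dt. -/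
open MeasureTheory Set Filter Real

noncomputable section

/-!
The tail `F t = t ^ (-β) * τ (log t)` (with `β = 1/α`) is `C¹` on `(0, ∞)`, so `μ` has
density `-F' t = t ^ (-β - 1) * (β * τ (log t) - τ' (log t))` there. This density is
nonnegative because `F` is antitone, and `O(t ^ (-β - 1))` because `βτ - τ'` is continuous and
periodic, hence bounded. As `0 < β < 1`, it follows that `∫ min t 1 dμ < ∞`. Since
`t e^{-xt} ≤ C_s min t 1` for `x` near `s > 0`, one may differentiate under the integral sign;
rewriting the result through the density gives the second formula.
-/

open Topology

lemma one_sub_exp_neg_mul_le {s t : ℝ} (ht : 0 ≤ t) :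
    1 - exp (-(s * t)) ≤ max s 1 * min t 1 := by
  have hexp := add_one_le_exp (-(s * t))
  rcases le_total t 1 with h | h
  · rw [min_eq_left h]
    nlinarith [le_max_left s 1]
  · rw [min_eq_right h]
    nlinarith [le_max_right s 1, exp_pos (-(s * t))]

lemma exp_neg_mul_mul_le {c t : ℝ} (hc : 0 < c) (ht : 0 ≤ t) :
    exp (-(c * t)) * t ≤ max 1 c⁻¹ * min t 1 := by
  have hexp1 : exp (-(c * t)) ≤ 1 := exp_le_one_iff.2 (by nlinarith)
  rcases le_total t 1 with h | h
  · rw [min_eq_left h]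
    nlinarith [le_max_left 1 c⁻¹]
  · rw [min_eq_right h, mul_one]
    have key : exp (-(c * t)) * t ≤ c⁻¹ := by
      rw [exp_neg, ← div_eq_inv_mul, div_le_iff₀ (exp_pos _), inv_mul_eq_div,
        le_div_iff₀ hc]
      nlinarith [add_one_le_exp (c * t)]
    exact key.trans (le_max_right _ _)

theorem hasDerivAt_integral_one_sub_exp {ν : Measure ℝ}
    (hν : IntegrableOn (fun t => min t 1) (Ioi 0) ν) {s : ℝ} (hs : 0 < s) :
    HasDerivAt (fun x => ∫ t in Ioi 0, (1 - exp (-(x * t))) ∂ν)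
      (∫ t in Ioi 0, exp (-(s * t)) * t ∂ν) s := by
  have hball : Metric.ball s (s / 2) ∈ 𝓝 s := Metric.ball_mem_nhds s (by linarith)
  have hint : Integrable (fun t => 1 - exp (-(s * t))) (ν.restrict (Ioi 0)) := by
    refine (hν.const_mul (max s 1)).mono' (by fun_prop) ?_
    filter_upwards [ae_restrict_mem measurableSet_Ioi] with t (ht : 0 < t)
    rw [norm_of_nonneg (sub_nonneg.2 (exp_le_one_iff.2 (by nlinarith)))]
    exact one_sub_exp_neg_mul_le ht.le
  have hbound : ∀ᵐ t ∂ν.restrict (Ioi 0), ∀ x ∈ Metric.ball s (s / 2),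
      ‖exp (-(x * t)) * t‖ ≤ max 1 (s / 2)⁻¹ * min t 1 := by
    filter_upwards [ae_restrict_mem measurableSet_Ioi] with t (ht : 0 < t) x hx
    have hx : s / 2 < x := by
      rw [Metric.mem_ball, Real.dist_eq, abs_lt] at hx
      linarith
    rw [norm_of_nonneg (by positivity)]
    calc exp (-(x * t)) * t ≤ exp (-(s / 2 * t)) * t := by gcongr
      _ ≤ _ := exp_neg_mul_mul_le (by linarith) ht.le
  have hderiv : ∀ t, ∀ x ∈ Metric.ball s (s / 2),
      HasDerivAt (fun x => 1 - exp (-(x * t))) (exp (-(x * t)) * t) x := by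
    intro t x _
    simpa using ((hasDerivAt_mul_const t).neg.exp).const_sub 1
  exact (hasDerivAt_integral_of_dominated_loc_of_deriv_le hball
    (Eventually.of_forall fun _ => by fun_prop) hint (by fun_prop) hbound
    (hν.const_mul _) (Eventually.of_forall hderiv)).2

section TailDensity

variable {μ : Measure ℝ} {F f : ℝ → ℝ}

lemma measure_Ioc_eq_ofReal_sub_of_tail (hμ : ∀ t > 0, μ (Ioi t) = ENNReal.ofReal (F t))
    (hF0 : ∀ t > 0, 0 ≤ F t) {a b : ℝ} (ha : 0 < a) (hab : a ≤ b) :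
    μ (Ioc a b) = ENNReal.ofReal (F a - F b) := by
  have hb : 0 < b := ha.trans_le hab
  rw [← Ioi_sdiff_Ioi, measure_sdiff (Ioi_subset_Ioi hab) measurableSet_Ioi.nullMeasurableSet
    (by rw [hμ b hb]; exact ENNReal.ofReal_ne_top), hμ a ha, hμ b hb,
    ENNReal.ofReal_sub _ (hF0 b hb)]

lemma withDensity_Ioc_eq_ofReal_sub (hF : ∀ t > 0, HasDerivAt F (-f t) t)
    (hf : ContinuousOn f (Ioi 0)) (hf0 : ∀ t > 0, 0 ≤ f t) {a b : ℝ} (ha : 0 < a)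
    (hab : a ≤ b) :
    volume.withDensity (fun t => ENNReal.ofReal (f t)) (Ioc a b) =
      ENNReal.ofReal (F a - F b) := by
  have hpos : Icc a b ⊆ Ioi 0 := fun t ht => ha.trans_le ht.1
  have hftc : ∫ t in a..b, f t = F a - F b := by
    rw [intervalIntegral.integral_eq_sub_of_hasDerivAt (f := -F)
      (fun t ht => by simpa using (hF t (hpos (uIcc_of_le hab ▸ ht))).neg)
      ((hf.mono (uIcc_of_le hab ▸ hpos)).intervalIntegrable), Pi.neg_apply, Pi.neg_apply]
    ring
  rw [withDensity_apply _ measurableSet_Ioc, ← ofReal_integral_eq_lintegral_ofReal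
    ((hf.mono hpos).integrableOn_Icc.mono_set Ioc_subset_Icc_self)
    (ae_restrict_of_forall_mem measurableSet_Ioc fun t ht => hf0 t (hpos (Ioc_subset_Icc_self ht))),
    ← intervalIntegral.integral_of_le hab, hftc]

theorem restrict_Ioi_eq_withDensity_of_tail (hμ : ∀ t > 0, μ (Ioi t) = ENNReal.ofReal (F t))
    (hF0 : ∀ t > 0, 0 ≤ F t) (hF : ∀ t > 0, HasDerivAt F (-f t) t)
    (hf : ContinuousOn f (Ioi 0)) (hf0 : ∀ t > 0, 0 ≤ f t) :
    μ.restrict (Ioi 0) = (volume.withDensity fun t => ENNReal.ofReal (f t)).restrict (Ioi 0) := by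
  set ν := volume.withDensity fun t => ENNReal.ofReal (f t)
  have hIoc : ∀ a b, 0 < a → μ (Ioc a b) = ν (Ioc a b) := by
    intro a b ha
    rcases le_total a b with hab | hba
    · rw [measure_Ioc_eq_ofReal_sub_of_tail hμ hF0 ha hab,
        withDensity_Ioc_eq_ofReal_sub hF hf hf0 ha hab]
    · simp [Ioc_eq_empty_of_le hba]
  have hunion : Ioi (0 : ℝ) = ⋃ n : ℕ, Ioi (1 / ((n : ℝ) + 1)) := by
    ext t
    simp only [mem_Ioi, mem_iUnion]
    exact ⟨fun ht => exists_nat_one_div_lt ht, fun ⟨n, hn⟩ => lt_trans (by positivity) hn⟩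
  -- `μ (Ioc 0 b)` may be infinite, so compare the measures on each `Ioi (1 / (n + 1))`.
  rw [hunion, Measure.restrict_iUnion_congr]
  intro n
  have hε : (0 : ℝ) < 1 / ((n : ℝ) + 1) := by positivity
  refine Measure.ext_of_Ioc' _ _ (fun a b _ => ?_) (fun a b _ => ?_)
  · rw [Measure.restrict_apply measurableSet_Ioc]
    refine ne_top_of_le_ne_top ?_ (measure_mono inter_subset_right)
    rw [hμ _ hε]
    exact ENNReal.ofReal_ne_top
  · rw [Measure.restrict_apply measurableSet_Ioc, Measure.restrict_apply measurableSet_Ioc,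
      Ioc_inter_Ioi, hIoc _ _ (hε.trans_le le_sup_right)]

end TailDensity

section WithDensity

variable {f : ℝ → ℝ}

lemma setIntegral_Ioi_withDensity_ofReal (hf : ContinuousOn f (Ioi 0))
    (hf0 : ∀ t > 0, 0 ≤ f t) (g : ℝ → ℝ) :
    ∫ t in Ioi 0, g t ∂(volume.withDensity fun t => ENNReal.ofReal (f t)) =
      ∫ t in Ioi 0, f t * g t := by
  rw [setIntegral_withDensity_eq_setIntegral_toReal_smul₀
    (hf.aemeasurable measurableSet_Ioi).ennreal_ofReal
    (Eventually.of_forall fun _ => ENNReal.ofReal_lt_top) g measurableSet_Ioi]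
  refine setIntegral_congr_fun measurableSet_Ioi fun t (ht : 0 < t) => ?_
  rw [ENNReal.toReal_ofReal (hf0 t ht), smul_eq_mul]

lemma integrableOn_Ioi_withDensity_ofReal_iff (hf : ContinuousOn f (Ioi 0))
    (hf0 : ∀ t > 0, 0 ≤ f t) {g : ℝ → ℝ} :
    IntegrableOn g (Ioi 0) (volume.withDensity fun t => ENNReal.ofReal (f t)) ↔
      IntegrableOn (fun t => f t * g t) (Ioi 0) := by
  rw [IntegrableOn, restrict_withDensity measurableSet_Ioi,
    integrable_withDensity_iff_integrable_smul₀'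
      (hf.aemeasurable measurableSet_Ioi).ennreal_ofReal
      (Eventually.of_forall fun _ => ENNReal.ofReal_lt_top)]
  refine integrable_congr ?_
  filter_upwards [ae_restrict_mem measurableSet_Ioi] with t (ht : 0 < t)
  rw [ENNReal.toReal_ofReal (hf0 t ht), smul_eq_mul]

end WithDensity

lemma integrableOn_min_one_mul_rpow {β : ℝ} (hβ0 : 0 < β) (hβ1 : β < 1) :
    IntegrableOn (fun t : ℝ => min t 1 * t ^ (-β - 1)) (Ioi 0) := by
  rw [← Ioc_union_Ioi_eq_Ioi zero_le_one]
  refine IntegrableOn.union ?_ ?_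
  · have h : IntegrableOn (fun t : ℝ => t ^ (-β)) (Ioc 0 1) :=
      ((intervalIntegral.integrableOn_Ioo_rpow_iff (s := -β) one_pos).2 (by linarith)).congr_set_ae
        Ioo_ae_eq_Ioc.symm
    refine h.congr_fun (fun t ht => ?_) measurableSet_Ioc
    rw [min_eq_left ht.2, rpow_sub_one ht.1.ne', mul_div_cancel₀ _ ht.1.ne']
  · refine (integrableOn_Ioi_rpow_of_lt (a := -β - 1) (by linarith) one_pos).congr_fun
      (fun t ht => ?_) measurableSet_Ioi
    rw [min_eq_right (le_of_lt ht), one_mul]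

def levyDensity (β : ℝ) (τ : ℝ → ℝ) (t : ℝ) : ℝ :=
  t ^ (-β - 1) * (β * τ (log t) - deriv τ (log t))

section LevyDensity

variable {β : ℝ} {τ : ℝ → ℝ}

lemma hasDerivAt_rpow_neg_mul_comp_log (hτ : Differentiable ℝ τ) {t : ℝ} (ht : 0 < t) :
    HasDerivAt (fun u => u ^ (-β) * τ (log u)) (-levyDensity β τ t) t := by
  have h : HasDerivAt (fun u => u ^ (-β) * τ (log u))
      (-β * t ^ (-β - 1) * τ (log t) + t ^ (-β) * (deriv τ (log t) * t⁻¹)) t :=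
    (hasDerivAt_rpow_const (Or.inl ht.ne')).mul
      ((hτ (log t)).hasDerivAt.comp t (hasDerivAt_log ht.ne'))
  convert h using 1
  rw [levyDensity, rpow_sub_one ht.ne']
  field_simp
  ring

lemma continuousOn_levyDensity (hτ : ContDiff ℝ 1 τ) :
    ContinuousOn (levyDensity β τ) (Ioi 0) := by
  have hlog : ContinuousOn log (Ioi 0) := continuousOn_log.mono fun t ht => ne_of_gt ht
  exact (continuousOn_id.rpow_const fun t ht => Or.inl (ne_of_gt ht)).mul <|
    ((continuous_const.mul hτ.continuous).sub (hτ.continuous_deriv le_rfl)).comp_continuousOn hlog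

lemma levyDensity_nonneg (hτ : Differentiable ℝ τ)
    (hanti : AntitoneOn (fun t => t ^ (-β) * τ (log t)) (Ioi 0)) {t : ℝ} (ht : 0 < t) :
    0 ≤ levyDensity β τ t := by
  have hacc : AccPt t (𝓟 (Ioi 0)) := accPt_principal_iff_nhdsWithin.2 <|
    Filter.neBot_of_le (f := 𝓝[>] t) <| nhdsWithin_mono _ fun u (hu : t < u) =>
      ⟨ht.trans hu, ne_of_gt hu⟩
  simpa using (hasDerivAt_rpow_neg_mul_comp_log hτ ht).hasDerivWithinAt.nonpos_of_antitoneOn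
    hacc hanti

lemma exists_levyDensity_le (hτ : ContDiff ℝ 1 τ) {p : ℝ} (hp : p ≠ 0)
    (hper : Function.Periodic τ p) :
    ∃ K, ∀ t > 0, levyDensity β τ t ≤ K * t ^ (-β - 1) := by
  have hper' : Function.Periodic (fun x => β * τ x - deriv τ x) p := fun x => by
    simp only [hper x, hper.deriv x]
  obtain ⟨K, hK⟩ := hper'.isBounded_of_continuous hp
    ((continuous_const.mul hτ.continuous).sub (hτ.continuous_deriv le_rfl)) |>.bddAbove
  refine ⟨K, fun t ht => ?_⟩
  rw [levyDensity, mul_comm K]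
  exact mul_le_mul_of_nonneg_left (hK (mem_range_self (log t))) (rpow_nonneg ht.le _)

lemma integrableOn_levyDensity_mul_min_one (hβ0 : 0 < β) (hβ1 : β < 1) (hτ : ContDiff ℝ 1 τ)
    (hanti : AntitoneOn (fun t => t ^ (-β) * τ (log t)) (Ioi 0)) {p : ℝ} (hp : p ≠ 0)
    (hper : Function.Periodic τ p) :
    IntegrableOn (fun t => levyDensity β τ t * min t 1) (Ioi 0) := by
  obtain ⟨K, hK⟩ := exists_levyDensity_le hτ hp hper
  refine ((integrableOn_min_one_mul_rpow hβ0 hβ1).const_mul K).mono'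
    (((continuousOn_levyDensity hτ).mul (continuous_id.min continuous_const).continuousOn
      ).aestronglyMeasurable measurableSet_Ioi) ?_
  filter_upwards [ae_restrict_mem measurableSet_Ioi] with t (ht : 0 < t)
  have hmin : 0 ≤ min t 1 := le_min ht.le zero_le_one
  rw [norm_of_nonneg (mul_nonneg (levyDensity_nonneg (hτ.differentiable one_ne_zero) hanti ht)
    hmin)]
  nlinarith [hK t ht]

end LevyDensity

/-- for a continuously differentiable admissable `τ` w.r.t. `1/α` and `d`,
with `ξ(s) = ∫₀^∞ (1 − e^(−st)) dμ(t)` and `μ((t,∞)) = t^(−1/α) τ(log t)`, one has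
`ξ'(s) = ∫₀^∞ e^(−st) t dμ(t) = ∫₀^∞ e^(−st) t^(−1/α)((1/α)τ(log t) − τ'(log t)) dt`. -/
theorem stmt16 (α d : ℝ) (hα : α ∈ Set.Ioo (1:ℝ) 2) (hd : 1 < d)
    (τ : ℝ → ℝ) (hτC1 : ContDiff ℝ 1 τ) (hτ : IsAdmissable τ (1/α) d)
    (μ : MeasureTheory.Measure ℝ) (hμ : IsTailMeasure μ (1/α) τ)
    (ξ : ℝ → ℝ)
    (hξ : ξ = fun s : ℝ => ∫ t in Set.Ioi (0:ℝ), (1 - Real.exp (-(s * t))) ∂μ) :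
    ∀ s > (0:ℝ),
      deriv ξ s = (∫ t in Set.Ioi (0:ℝ), Real.exp (-(s * t)) * t ∂μ) ∧
      deriv ξ s = ∫ t in Set.Ioi (0:ℝ),
        Real.exp (-(s * t)) *
          (t ^ (-(1/α)) * ((1/α) * τ (Real.log t) - deriv τ (Real.log t))) := by
  intro s hs
  obtain ⟨hτpos, hanti, hper⟩ := hτ
  have hβ0 : 0 < 1 / α := one_div_pos.2 (zero_lt_one.trans hα.1)
  have hβ1 : 1 / α < 1 := (div_lt_one (zero_lt_one.trans hα.1)).2 hα.1
  have hp : log (d ^ (1 / (1 / α))) ≠ 0 := by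
    rw [log_rpow (zero_lt_one.trans hd)]
    exact mul_ne_zero (by positivity) (log_pos hd).ne'
  have hτd : Differentiable ℝ τ := hτC1.differentiable one_ne_zero
  have hcont := continuousOn_levyDensity (β := 1 / α) hτC1
  have hnonneg : ∀ t > 0, 0 ≤ levyDensity (1 / α) τ t :=
    fun _ => levyDensity_nonneg hτd hanti
  have hdens := restrict_Ioi_eq_withDensity_of_tail hμ.2
    (fun t ht => (mul_pos (rpow_pos_of_pos ht _) (hτpos _)).le)
    (fun _ => hasDerivAt_rpow_neg_mul_comp_log hτd) hcont hnonneg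
  have hlevy : IntegrableOn (fun t => min t 1) (Ioi 0) μ := by
    rw [IntegrableOn, hdens, ← IntegrableOn,
      integrableOn_Ioi_withDensity_ofReal_iff hcont hnonneg]
    exact integrableOn_levyDensity_mul_min_one hβ0 hβ1 hτC1 hanti hp hper
  have hderiv : deriv ξ s = ∫ t in Ioi 0, exp (-(s * t)) * t ∂μ :=
    hξ ▸ (hasDerivAt_integral_one_sub_exp hlevy hs).deriv
  refine ⟨hderiv, hderiv.trans ?_⟩
  rw [hdens, setIntegral_Ioi_withDensity_ofReal hcont hnonneg]
  refine setIntegral_congr_fun measurableSet_Ioi fun t (ht : 0 < t) => ?_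
  rw [levyDensity, rpow_sub_one ht.ne']
  field_simp
end
end

section
/- Let A, B ⊆ ℝ be open, let n ≥ 2, and let f : A → B be an invertible C^n function with f′(x) ≠ 0 for all x ∈ A. Then f^{−1} : B → A is of class C^n and for every x ∈ B, (f^{−1})^{(n)}(x) = −(1/f′(f^{−1}(x))) · ∑ over all tuples of non-negative integers (k₁, …, k_{n−1}) with k₁ + 2k₂ + ⋯ + (n−1)k_{n−1} = n of [ n!/(k₁! ⋯ k_{n−1}!) · f^{(k₁+⋯+k_{n−1})}(f^{−1}(x)) · ∏_{j=1}^{n−1} ( (f^{−1})^{(j)}(x) / j! )^{k_j} ]. -/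
open MeasureTheory Set Filter Real

noncomputable section

/-!
Since `f ∘ g = id` near every point of `B`, Faà di Bruno's formula for `f ∘ g`, written as a sum
over the ordered finpartitions `c` of `Fin n`, gives for `n ≥ 2`
`0 = ∑ c, f^(#blocks of c)(g x) · ∏ (blocks b of c) g^(|b|)(x)`.
A summand depends only on the block type `k` of `c` (`k j` blocks of size `j`), and exactly
`n! / ∏ j, (j!)^(k j) (k j)!` of these partitions have type `k`; this count follows by
induction on `n`, inserting the new element either as a singleton block or into one of the
existing blocks.
The one-block partition contributes `f'(g x) g^(n)(x)`, and solving for `g^(n)(x)` gives the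
formula. That `g` is `C^n` at all is the inverse function theorem.
-/

open Finset
open scoped Nat

section BlockTypes

lemma Finsupp.exists_eq_add_single {ι : Type*} {k : ι →₀ ℕ} {t : ι} (h : k t ≠ 0) :
    ∃ k', k = k' + Finsupp.single t 1 :=
  ⟨_, (Finsupp.sub_add_single_one_cancel h).symm⟩

lemma Finsupp.support_subset_range_weight_id (k : ℕ →₀ ℕ) :
    k.support ⊆ range (Finsupp.weight id k + 1) := fun _ hj =>
  mem_range_succ_iff.2 (Finsupp.le_weight_of_ne_zero' id (Finsupp.mem_support_iff.1 hj))

lemma Finsupp.eq_zero_of_weight_id_eq_zero {k : ℕ →₀ ℕ} (h0 : k 0 = 0)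
    (h : Finsupp.weight id k = 0) : k = 0 := by
  ext j
  by_contra hj
  have := Finsupp.le_weight_of_ne_zero' id hj
  simp_all

lemma Finsupp.eq_single_of_weight_id_eq {k : ℕ →₀ ℕ} {n : ℕ} (h0 : k 0 = 0)
    (hk : Finsupp.weight id k = n) (hn : k n ≠ 0) : k = Finsupp.single n 1 := by
  obtain ⟨k', rfl⟩ := Finsupp.exists_eq_add_single hn
  have : k' = 0 := Finsupp.eq_zero_of_weight_id_eq_zero
    (by simp only [Finsupp.add_apply] at h0; omega) (by simp [Finsupp.weight_single] at hk; omega)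
  rw [this, zero_add]

def blockTypeDenom (k : ℕ →₀ ℕ) : ℕ :=
  k.prod fun j m => j ! ^ m * m !

lemma blockTypeDenom_add_single (k : ℕ →₀ ℕ) (t : ℕ) :
    blockTypeDenom (k + Finsupp.single t 1) = t ! * (k t + 1) * blockTypeDenom k := by
  have split (k' : ℕ →₀ ℕ) : blockTypeDenom k' =
      t ! ^ k' t * (k' t)! * (k'.erase t).prod fun j m => j ! ^ m * m ! :=
    (Finsupp.mul_prod_erase' k' t _ fun _ => by simp).symm
  rw [split, split k, Finsupp.erase_add, Finsupp.erase_single, add_zero]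
  simp only [Finsupp.add_apply, Finsupp.single_eq_same, Nat.factorial_succ, pow_succ]
  ring

variable {m : ℕ}

lemma Fin.val_add_one_injective : Function.Injective fun j : Fin m => (j : ℕ) + 1 :=
  fun _ _ h => Fin.ext (Nat.succ_injective h)

def blockTypeOfTuple (κ : Fin m → ℕ) : ℕ →₀ ℕ :=
  Finsupp.mapDomain (fun j : Fin m => (j : ℕ) + 1) (Finsupp.equivFunOnFinite.symm κ)

lemma blockTypeOfTuple_apply_succ (κ : Fin m → ℕ) (j : Fin m) :
    blockTypeOfTuple κ (j + 1) = κ j :=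
  Finsupp.mapDomain_apply Fin.val_add_one_injective _ j

lemma blockTypeOfTuple_apply_of_forall_ne (κ : Fin m → ℕ) {t : ℕ}
    (ht : ∀ j : Fin m, (j : ℕ) + 1 ≠ t) : blockTypeOfTuple κ t = 0 :=
  Finsupp.mapDomain_of_notMem_range _ _ fun ⟨j, hj⟩ => ht j hj

@[to_additive]
lemma blockTypeOfTuple_prod {M : Type*} [CommMonoid M] (κ : Fin m → ℕ) {h : ℕ → ℕ → M}
    (h_zero : ∀ j, h j 0 = 1) :
    (blockTypeOfTuple κ).prod h = ∏ j : Fin m, h (j + 1) (κ j) := by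
  rw [blockTypeOfTuple, Finsupp.prod_mapDomain_index_inj Fin.val_add_one_injective,
    Finsupp.prod_fintype _ _ fun _ => h_zero _]
  rfl

lemma degree_blockTypeOfTuple (κ : Fin m → ℕ) :
    (blockTypeOfTuple κ).degree = ∑ j, κ j :=
  blockTypeOfTuple_sum (h := fun _ m => m) _ fun _ => rfl

lemma weight_blockTypeOfTuple (κ : Fin m → ℕ) :
    Finsupp.weight id (blockTypeOfTuple κ) = ∑ j : Fin m, ((j : ℕ) + 1) * κ j := by
  rw [Finsupp.weight_apply, blockTypeOfTuple_sum (h := fun i c => c • id i) _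
    fun _ => zero_smul _ _]
  simp [mul_comm]

lemma blockTypeOfTuple_eq {k : ℕ →₀ ℕ} (h0 : k 0 = 0) (hm : ∀ t, m < t → k t = 0) :
    blockTypeOfTuple (fun j : Fin m => k (j + 1)) = k := by
  ext t
  rcases t with _ | t
  · exact (blockTypeOfTuple_apply_of_forall_ne _ fun _ => Nat.succ_ne_zero _).trans h0.symm
  by_cases ht : t < m
  · exact blockTypeOfTuple_apply_succ _ ⟨t, ht⟩
  · rw [hm _ (by omega), blockTypeOfTuple_apply_of_forall_ne _ fun j hj => by omega]

end BlockTypes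

namespace OrderedFinpartition

variable {n : ℕ}

def blockType (c : OrderedFinpartition n) : ℕ →₀ ℕ :=
  ∑ i, Finsupp.single (c.partSize i) 1

@[to_additive]
lemma blockType_prod_index {M : Type*} [CommMonoid M] (c : OrderedFinpartition n)
    {h : ℕ → ℕ → M} (h_zero : ∀ j, h j 0 = 1) (h_add : ∀ j a b, h j (a + b) = h j a * h j b) :
    c.blockType.prod h = ∏ i, h (c.partSize i) 1 := by
  rw [blockType, ← Finsupp.prod_finsetSum_index h_zero h_add]
  exact Finset.prod_congr rfl fun i _ => Finsupp.prod_single_index (h_zero _)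

lemma blockType_apply (c : OrderedFinpartition n) (j : ℕ) :
    c.blockType j = #{i | c.partSize i = j} := by
  simp only [blockType, Finsupp.finsetSum_apply, Finsupp.single_apply, Finset.sum_boole]
  simp

lemma blockType_apply_zero (c : OrderedFinpartition n) : c.blockType 0 = 0 := by
  simp [blockType_apply, (c.partSize_pos _).ne']

lemma blockType_apply_le (c : OrderedFinpartition n) (j : ℕ) : c.blockType j ≤ n :=
  (c.blockType_apply j ▸ card_filter_le _ _).trans ((card_fin _).trans_le c.length_le)

lemma degree_blockType (c : OrderedFinpartition n) : c.blockType.degree = c.length :=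
  (c.blockType_sum_index (h := fun _ m => m) (fun _ => rfl) (fun _ _ _ => rfl)).trans (by simp)

lemma weight_blockType (c : OrderedFinpartition n) : Finsupp.weight id c.blockType = n := by
  refine (c.blockType_sum_index (h := fun j m => m • id j) (fun _ => zero_smul _ _)
    (fun _ _ _ => add_smul _ _ _)).trans ?_
  simpa [Fintype.card_sigma] using Fintype.card_congr c.equivSigma

lemma support_blockType_subset (c : OrderedFinpartition n) :
    c.blockType.support ⊆ range (n + 1) := by
  simpa only [c.weight_blockType] using Finsupp.support_subset_range_weight_id c.blockType

lemma blockType_apply_of_lt (c : OrderedFinpartition n) {t : ℕ} (ht : n < t) :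
    c.blockType t = 0 :=
  Finsupp.notMem_support_iff.1 fun h => by
    have := mem_range.1 (c.support_blockType_subset h)
    omega

lemma sum_partSize_eq_sum_range {M : Type*} [AddCommMonoid M] (c : OrderedFinpartition n)
    (F : ℕ → M) : ∑ i, F (c.partSize i) = ∑ s ∈ range (n + 1), c.blockType s • F s := by
  rw [← Finsupp.sum_of_support_subset _ c.support_blockType_subset (fun s m => m • F s)
    fun _ _ => zero_smul _ _, c.blockType_sum_index (h := fun s m => m • F s)
    (fun _ => zero_smul _ _) fun _ _ _ => add_smul _ _ _]
  simp only [one_smul]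

lemma blockType_extendLeft (c : OrderedFinpartition n) :
    c.extendLeft.blockType = c.blockType + Finsupp.single 1 1 := by
  change ∑ i : Fin (c.length + 1),
    Finsupp.single ((Fin.cons 1 c.partSize : Fin (c.length + 1) → ℕ) i) 1 = _
  rw [Fin.sum_univ_succ, blockType, add_comm]
  rfl

lemma blockType_extendMiddle (c : OrderedFinpartition n) (i : Fin c.length) :
    (c.extendMiddle i).blockType + Finsupp.single (c.partSize i) 1 =
      c.blockType + Finsupp.single (c.partSize i + 1) 1 := by
  change ∑ j, Finsupp.single (Function.update c.partSize i (c.partSize i + 1) j) 1 + _ = _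
  rw [blockType, ← sum_erase_add _ _ (mem_univ i), ← sum_erase_add _ _ (mem_univ i),
    Function.update_self, add_right_comm,
    sum_congr rfl fun j hj => by rw [Function.update_of_ne (ne_of_mem_erase hj)]]

lemma blockType_extendMiddle_eq_iff (c : OrderedFinpartition n) (i : Fin c.length)
    (k : ℕ →₀ ℕ) : (c.extendMiddle i).blockType = k ↔
      c.blockType + Finsupp.single (c.partSize i + 1) 1 = k + Finsupp.single (c.partSize i) 1 := by
  rw [← blockType_extendMiddle, add_left_inj]

lemma card_blockType_succ (k : ℕ →₀ ℕ) :
    #{c : OrderedFinpartition (n + 1) | c.blockType = k} =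
      #{c : OrderedFinpartition n | c.blockType + Finsupp.single 1 1 = k} +
      ∑ s ∈ range (n + 1), ∑ c : OrderedFinpartition n,
        c.blockType s * if c.blockType + Finsupp.single (s + 1) 1 = k + Finsupp.single s 1
          then 1 else 0 := by
  simp only [card_filter]
  rw [← (extendEquiv n).sum_comp, Fintype.sum_sigma, sum_comm, ← sum_add_distrib]
  refine sum_congr rfl fun c _ => ?_
  rw [Fintype.sum_option]
  simp only [extendEquiv_apply, extend_none, extend_some, blockType_extendLeft,
    blockType_extendMiddle_eq_iff]
  rw [sum_partSize_eq_sum_range c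
    fun s => if c.blockType + Finsupp.single (s + 1) 1 = k + Finsupp.single s 1 then 1 else 0]
  rfl

lemma sum_blockType_mul_ite_eq (k : ℕ →₀ ℕ) (s : ℕ) :
    ∑ c : OrderedFinpartition n, c.blockType s *
        (if c.blockType + Finsupp.single (s + 1) 1 =
          k + Finsupp.single (s + 1) 1 + Finsupp.single s 1 then 1 else 0) =
      (k s + 1) * #{c : OrderedFinpartition n | c.blockType = k + Finsupp.single s 1} := by
  rw [card_filter, mul_sum]
  refine sum_congr rfl fun c _ => ?_
  simp only [add_right_comm k, add_left_inj]
  split_ifs with h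
  · simp [h]
  · rfl

section CountingStep

variable (ih : ∀ k : ℕ →₀ ℕ, k 0 = 0 → Finsupp.weight id k = n →
  #{c : OrderedFinpartition n | c.blockType = k} * blockTypeDenom k = n !)
  {k : ℕ →₀ ℕ} (hk0 : k 0 = 0) (hk : Finsupp.weight id k = n + 1)
include ih hk0 hk

lemma card_extendLeft_fiber_mul_blockTypeDenom :
    #{c : OrderedFinpartition n | c.blockType + Finsupp.single 1 1 = k} *
      blockTypeDenom k = n ! * (1 * k 1) := by
  by_cases h1 : k 1 = 0
  · suffices #{c : OrderedFinpartition n | c.blockType + Finsupp.single 1 1 = k} = 0 by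
      simp [this, h1]
    refine card_eq_zero.2 (filter_eq_empty_iff.2 fun c _ hc => ?_)
    simpa [h1] using congrArg (· 1) hc
  obtain ⟨k', rfl⟩ := Finsupp.exists_eq_add_single h1
  have := ih k' (by simpa using hk0) (by simp [Finsupp.weight_single] at hk; omega)
  simp only [add_left_inj, blockTypeDenom_add_single, Finsupp.add_apply,
    Finsupp.single_eq_same]
  rw [← this]
  ring

lemma sum_extendMiddle_fiber_mul_blockTypeDenom {s : ℕ} (hs : s ≠ 0) :
    (∑ c : OrderedFinpartition n, c.blockType s *
      if c.blockType + Finsupp.single (s + 1) 1 = k + Finsupp.single s 1 then 1 else 0) *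
      blockTypeDenom k = n ! * ((s + 1) * k (s + 1)) := by
  by_cases h : k (s + 1) = 0
  · suffices ∀ c : OrderedFinpartition n,
        c.blockType + Finsupp.single (s + 1) 1 ≠ k + Finsupp.single s 1 by simp [this, h]
    intro c hc
    simpa [h] using congrArg (· (s + 1)) hc
  obtain ⟨k', rfl⟩ := Finsupp.exists_eq_add_single h
  have := ih (k' + Finsupp.single s 1) (by simpa [hs] using hk0)
    (by simp [Finsupp.weight_single] at hk ⊢; omega)
  rw [sum_blockType_mul_ite_eq, blockTypeDenom_add_single, ← this, blockTypeDenom_add_single,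
    Nat.factorial_succ]
  simp only [Finsupp.add_apply, Finsupp.single_eq_same]
  ring

end CountingStep

theorem card_blockType_mul_blockTypeDenom (n : ℕ) (k : ℕ →₀ ℕ) (hk0 : k 0 = 0)
    (hk : Finsupp.weight id k = n) :
    #{c : OrderedFinpartition n | c.blockType = k} * blockTypeDenom k = n ! := by
  induction n generalizing k with
  | zero =>
    obtain rfl := Finsupp.eq_zero_of_weight_id_eq_zero hk0 hk
    have (c : OrderedFinpartition 0) : c.blockType = 0 := by
      have := c.length_le
      exact sum_eq_zero fun i _ => absurd i.2 (by omega)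
    simp [blockTypeDenom, this]
  | succ n ih =>
    have hweight : ∑ t ∈ range (n + 2), t * k t = n + 1 := by
      rw [← hk, Finsupp.weight_apply, Finsupp.sum_of_support_subset k
        (by simpa [hk] using Finsupp.support_subset_range_weight_id k) (fun i c => c • id i)
        fun _ _ => zero_smul _ _]
      simp [mul_comm]
    rw [sum_range_succ', sum_range_succ', zero_add] at hweight
    have hzero : (∑ c : OrderedFinpartition n, c.blockType 0 *
        if c.blockType + Finsupp.single (0 + 1) 1 = k + Finsupp.single 0 1 then 1 else 0) = 0 := by
      simp [blockType_apply_zero]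
    rw [card_blockType_succ, add_mul, sum_mul,
      card_extendLeft_fiber_mul_blockTypeDenom ih hk0 hk, sum_range_succ', hzero, zero_mul,
      add_zero, sum_congr rfl fun s _ =>
        sum_extendMiddle_fiber_mul_blockTypeDenom ih hk0 hk s.succ_ne_zero,
      ← mul_sum, ← mul_add, Nat.factorial_succ, mul_comm (n + 1)]
    congr 1
    omega

lemma card_blockType_eq_single (hn : n ≠ 0) :
    #{c : OrderedFinpartition n | c.blockType = Finsupp.single n 1} = 1 := by
  have := card_blockType_mul_blockTypeDenom n (Finsupp.single n 1)
    (Finsupp.single_eq_of_ne hn.symm) (by simp [Finsupp.weight_single])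
  rw [← zero_add (Finsupp.single n 1), blockTypeDenom_add_single] at this
  simpa [blockTypeDenom, n.factorial_pos.ne'] using this

lemma blockType_eq_blockTypeOfTuple_iff (c : OrderedFinpartition n) (κ : Fin (n - 1) → ℕ) :
    c.blockType = blockTypeOfTuple κ ↔
      c.blockType n = 0 ∧ ∀ j : Fin (n - 1), c.blockType (j + 1) = κ j := by
  constructor
  · intro h
    refine ⟨?_, fun j => h ▸ blockTypeOfTuple_apply_succ κ j⟩
    exact h ▸ blockTypeOfTuple_apply_of_forall_ne κ fun j => by omega
  · rintro ⟨hn, hκ⟩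
    rw [← funext hκ, blockTypeOfTuple_eq c.blockType_apply_zero]
    intro t ht
    rcases (show t = n ∨ n < t by omega) with rfl | ht'
    exacts [hn, c.blockType_apply_of_lt ht']

theorem sum_blockType_eq {M : Type*} [AddCommMonoid M] (hn : n ≠ 0) (F : (ℕ →₀ ℕ) → M) :
    ∑ c : OrderedFinpartition n, F c.blockType = F (Finsupp.single n 1) +
      ∑ κ ∈ univ.filter (fun κ : Fin (n - 1) → Fin (n + 1) =>
          ∑ j : Fin (n - 1), ((j : ℕ) + 1) * (κ j : ℕ) = n),
        #{c : OrderedFinpartition n | c.blockType = blockTypeOfTuple fun j => κ j} •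
          F (blockTypeOfTuple fun j => κ j) := by
  rw [← sum_filter_not_add_sum_filter univ fun c => c.blockType n = 0]
  congr 1
  · have hfilter : univ.filter (fun c : OrderedFinpartition n => ¬c.blockType n = 0) =
        univ.filter (fun c => c.blockType = Finsupp.single n 1) := by
      ext c
      simp only [mem_filter, Finset.mem_univ, true_and]
      refine ⟨Finsupp.eq_single_of_weight_id_eq c.blockType_apply_zero c.weight_blockType,
        fun h => ?_⟩
      simp [h]
    rw [hfilter, sum_congr rfl fun c hc => by rw [(mem_filter.1 hc).2], sum_const,
      card_blockType_eq_single hn, one_smul]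
  · let toTuple (c : OrderedFinpartition n) (j : Fin (n - 1)) : Fin (n + 1) :=
      ⟨c.blockType (j + 1), Nat.lt_succ_of_le (c.blockType_apply_le _)⟩
    have hmaps : ∀ c ∈ univ.filter (fun c : OrderedFinpartition n => c.blockType n = 0),
        toTuple c ∈ univ.filter (fun κ : Fin (n - 1) → Fin (n + 1) =>
          ∑ j : Fin (n - 1), ((j : ℕ) + 1) * (κ j : ℕ) = n) := by
      intro c hc
      have h := (c.blockType_eq_blockTypeOfTuple_iff fun j => c.blockType (j + 1)).2
        ⟨(mem_filter.1 hc).2, fun _ => rfl⟩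
      have := c.weight_blockType
      rw [h, weight_blockTypeOfTuple] at this
      simpa [toTuple] using this
    rw [← sum_fiberwise_of_maps_to hmaps]
    refine sum_congr rfl fun κ _ => ?_
    have hfiber : (univ.filter fun c : OrderedFinpartition n => c.blockType n = 0).filter
        (fun c => toTuple c = κ) =
          univ.filter fun c => c.blockType = blockTypeOfTuple fun j => κ j := by
      ext c
      simp [blockType_eq_blockTypeOfTuple_iff, toTuple, funext_iff, Fin.ext_iff]
    rw [hfiber, sum_congr rfl fun c hc => by rw [(mem_filter.1 hc).2], sum_const]

theorem sum_mul_prod_partSize_eq {𝕜 : Type*} [Field 𝕜] [CharZero 𝕜] (hn : n ≠ 0)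
    (a b : ℕ → 𝕜) :
    ∑ c : OrderedFinpartition n, a c.length * ∏ i, b (c.partSize i) = a 1 * b n +
      ∑ κ ∈ univ.filter (fun κ : Fin (n - 1) → Fin (n + 1) =>
          ∑ j : Fin (n - 1), ((j : ℕ) + 1) * (κ j : ℕ) = n),
        ((n ! : 𝕜) / ∏ j, ((κ j : ℕ)! : 𝕜)) * a (∑ j, (κ j : ℕ)) *
          ∏ j : Fin (n - 1), (b (j + 1) / ((j + 1 : ℕ)! : 𝕜)) ^ (κ j : ℕ) := by
  let W (k : ℕ →₀ ℕ) : 𝕜 := a k.degree * k.prod fun j m => b j ^ m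
  have hW (c : OrderedFinpartition n) : a c.length * ∏ i, b (c.partSize i) = W c.blockType := by
    simp only [W, degree_blockType, c.blockType_prod_index (h := fun j m => b j ^ m)
      (fun _ => pow_zero _) (fun _ => pow_add _), pow_one]
  rw [sum_congr rfl fun c _ => hW c, sum_blockType_eq hn W]
  congr 1
  · simp [W, Finsupp.degree_single, Finsupp.prod_single_index]
  refine sum_congr rfl fun κ hκ => ?_
  have hcount := card_blockType_mul_blockTypeDenom n (blockTypeOfTuple fun j => κ j)
    (blockTypeOfTuple_apply_of_forall_ne _ fun _ => Nat.succ_ne_zero _)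
    (by rw [weight_blockTypeOfTuple]; exact (mem_filter.1 hκ).2)
  rw [blockTypeDenom, blockTypeOfTuple_prod _ fun _ => by simp, ← Nat.cast_inj (R := 𝕜)] at hcount
  push_cast at hcount
  rw [prod_mul_distrib] at hcount
  simp only [W, nsmul_eq_mul, degree_blockTypeOfTuple,
    blockTypeOfTuple_prod (h := fun j m => b j ^ m) _ fun _ => pow_zero _, div_pow,
    prod_div_distrib, ← hcount]
  have : ∏ j : Fin (n - 1), ((κ j : ℕ)! : 𝕜) ≠ 0 :=
    prod_ne_zero_iff.2 fun _ _ => Nat.cast_ne_zero.2 (Nat.factorial_ne_zero _)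
  have : ∏ j : Fin (n - 1), (((j : ℕ) + 1)! : 𝕜) ^ (κ j : ℕ) ≠ 0 :=
    prod_ne_zero_iff.2 fun _ _ => pow_ne_zero _ (Nat.cast_ne_zero.2 (Nat.factorial_ne_zero _))
  field_simp

end OrderedFinpartition

theorem ContDiffOn.of_invOn {𝕂 : Type*} [RCLike 𝕂] {f g : 𝕂 → 𝕂} {A B : Set 𝕂}
    {n : WithTop ℕ∞} (hn : n ≠ 0) (hA : IsOpen A) (hB : IsOpen B) (hg : MapsTo g B A)
    (hinv : InvOn g f A B) (hf : ContDiffOn 𝕂 n f A) (hf' : ∀ x ∈ A, deriv f x ≠ 0) :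
    ContDiffOn 𝕂 n g B := by
  intro y hy
  have hfa : ContDiffAt 𝕂 n f (g y) := hf.contDiffAt (hA.mem_nhds (hg hy))
  have hd := (hfa.differentiableAt hn).hasDerivAt.hasFDerivAt_equiv (hf' _ (hg hy))
  set loc := hfa.localInverse hd hn
  have hloc : ContDiffAt 𝕂 n loc (f (g y)) := hfa.to_localInverse hd hn
  have hright : ∀ᶠ z in nhds (f (g y)), f (loc z) = z :=
    (hfa.hasStrictFDerivAt' hd hn).eventually_right_inverse
  have hmem : ∀ᶠ z in nhds (f (g y)), loc z ∈ A :=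
    (hfa.hasStrictFDerivAt' hd hn).localInverse_continuousAt.preimage_mem_nhds
      (hA.mem_nhds ((hfa.hasStrictFDerivAt' hd hn).localInverse_apply_image.symm ▸ hg hy))
  rw [hinv.2 hy] at hloc hright hmem
  refine (hloc.congr_of_eventuallyEq ?_).contDiffWithinAt
  filter_upwards [hright, hmem, hB.mem_nhds hy] with z hz hzA hzB
  exact hinv.1.injOn (hg hzB) hzA (by rw [hinv.2 hzB, hz])

theorem sum_iteratedDeriv_orderedFinpartition_eq_zero {𝕜 : Type*} [NontriviallyNormedField 𝕜]
    {f g : 𝕜 → 𝕜} {n : ℕ} (hn : 2 ≤ n) {x : 𝕜} (hf : ContDiffAt 𝕜 n f (g x))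
    (hg : ContDiffAt 𝕜 n g x) (hfg : f ∘ g =ᶠ[nhds x] id) :
    ∑ c : OrderedFinpartition n,
      iteratedDeriv c.length f (g x) * ∏ i, iteratedDeriv (c.partSize i) g x = 0 := by
  rw [← iteratedDeriv_comp_eq_sum_orderedFinpartition hf hg le_rfl, hfg.iteratedDeriv_eq,
    iteratedDeriv_id, if_neg (by omega), if_neg (by omega)]

/-- The tuples `(k₁, …, k_(n−1))` with `k₁ + 2k₂ + ⋯ + (n−1)k_(n−1) = n` are encoded as
functions `k : Fin (n−1) → Fin (n+1)`, `k j` standing for `k_(j+1)` (each `k_j ≤ n`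
automatically). -/
theorem stmt19 (A B : Set ℝ) (hA : IsOpen A) (hB : IsOpen B) (n : ℕ) (hn : 2 ≤ n)
    (f g : ℝ → ℝ) (hbij : Set.BijOn f A B) (hinv : Set.InvOn g f A B)
    (hf : ContDiffOn ℝ (n : ℕ∞) f A) (hf' : ∀ x ∈ A, deriv f x ≠ 0) :
    ContDiffOn ℝ (n : ℕ∞) g B ∧
    ∀ x ∈ B,
      iteratedDeriv n g x =
        -(1 / deriv f (g x)) *
          ∑ k ∈ Finset.univ.filter
              (fun k : Fin (n - 1) → Fin (n + 1) =>
                ∑ j : Fin (n - 1), ((j : ℕ) + 1) * (k j : ℕ) = n),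
            ((n.factorial : ℝ) / ∏ j : Fin (n - 1), ((k j : ℕ).factorial : ℝ)) *
              iteratedDeriv (∑ j : Fin (n - 1), (k j : ℕ)) f (g x) *
              ∏ j : Fin (n - 1),
                (iteratedDeriv ((j : ℕ) + 1) g x / (((j : ℕ) + 1).factorial : ℝ))
                  ^ (k j : ℕ) := by
  have hgBA : MapsTo g B A := (hbij.symm hinv.symm).mapsTo
  have hg : ContDiffOn ℝ (n : ℕ∞) g B :=
    .of_invOn (by exact_mod_cast (by omega : n ≠ 0)) hA hB hgBA hinv hf hf'
  refine ⟨hg, fun x hx => ?_⟩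
  have hfg : f ∘ g =ᶠ[nhds x] id := Filter.eventually_of_mem (hB.mem_nhds hx) hinv.2
  have hzero := sum_iteratedDeriv_orderedFinpartition_eq_zero hn
    (hf.contDiffAt (hA.mem_nhds (hgBA hx))) (hg.contDiffAt (hB.mem_nhds hx)) hfg
  rw [OrderedFinpartition.sum_mul_prod_partSize_eq (by omega) (fun j => iteratedDeriv j f (g x))
    (fun j => iteratedDeriv j g x), iteratedDeriv_one] at hzero
  rw [← mul_div_cancel_left₀ (iteratedDeriv n g x) (hf' _ (hgBA hx)),
    eq_neg_of_add_eq_zero_left hzero]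
  ring
end
end
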